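/- arXiv:2304.00430 — 7 statements merged into one kernel-verified Lean document; each statement's English description precedes it below -/
import Mathlib

section
/- Let G be a reflexive graph and suppose that an edge vv' of G avoids every edge of a walk u_0 u_1 … u_t in G, where t ≥ 1. If neither {u_0, u_1, v, v'} nor {u_{t-1}, u_t, v, v'} induces a C4 in G, then for any x ∈ {v, v'} and any y ∈ {v, v'}, (u_0, x) ~ (u_t, y). -/
/-!
Common definitions.  A reflexive graph on a finite vertex type `V` is given by a
symmetric, reflexive adjacency relation `adj : V → V → Prop`; the edge set consists
of all pairs (including loops `v v`) with `adj u v`.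
-/

variable {V : Type*}

/-- `G` is a strong cocomparability graph: there is a linear (strict total) order on the
vertices such that the correspondingly ordered adjacency matrix contains no `Slash`
submatrix (rows `01`, `10`). -/
def IsStrongCocomp (adj : V → V → Prop) : Prop :=
  ∃ lt : V → V → Prop, IsStrictTotalOrder V lt ∧
    ∀ u v x y : V, lt u v → lt x y →
      ¬(¬ adj u x ∧ adj u y ∧ adj v x ∧ ¬ adj v y)

/-- `G` is a cocomparability graph: it has a cocomparability ordering. -/
def IsCocomp (adj : V → V → Prop) : Prop :=
  ∃ lt : V → V → Prop, IsStrictTotalOrder V lt ∧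
    ∀ x y z : V, lt x y → lt y z → adj x z → adj x y ∨ adj y z

/-- `(u,v)` forces `(u',v')`:  either the pairs are equal, or `uu', vv'` are edges and
`uv', vu'` are non-edges. -/
def Forces (adj : V → V → Prop) (p q : V × V) : Prop :=
  p = q ∨ (adj p.1 q.1 ∧ adj p.2 q.2 ∧ ¬ adj p.1 q.2 ∧ ¬ adj p.2 q.1)

/-- `(u,v)` implies `(u',v')`: there are walks `u_0 … u_k` and `v_0 … v_k` (on pairs of
distinct vertices) with `(u_0,v_0) = (u,v)`, `(u_k,v_k) = (u',v')` and each pair forcing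
the next. -/
def ImpliesRel (adj : V → V → Prop) (p q : V × V) : Prop :=
  ∃ (k : ℕ) (u v : ℕ → V),
    (u 0, v 0) = p ∧ (u k, v k) = q ∧
    (∀ i < k, adj (u i) (u (i+1))) ∧
    (∀ i < k, adj (v i) (v (i+1))) ∧
    (∀ i ≤ k, u i ≠ v i) ∧
    (∀ i < k, Forces adj (u i, v i) (u (i+1), v (i+1)))

/-- An invertible pair: distinct vertices `u, v` with `(u,v) ~ (v,u)`. -/
def InvertiblePair (adj : V → V → Prop) (u v : V) : Prop :=
  u ≠ v ∧ ImpliesRel adj (u, v) (v, u)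

/-- The ordered quadruple `a b c d` is (ignoring loops) an induced 4-cycle. -/
def IsC4 (adj : V → V → Prop) (a b c d : V) : Prop :=
  adj a b ∧ adj b c ∧ adj c d ∧ adj d a ∧ ¬ adj a c ∧ ¬ adj b d

/-- The ordered quadruple `a b c d` is (ignoring loops) an induced path on 4 vertices. -/
def IsP4 (adj : V → V → Prop) (a b c d : V) : Prop :=
  adj a b ∧ adj b c ∧ adj c d ∧ ¬ adj a c ∧ ¬ adj a d ∧ ¬ adj b d

/-- The ordered quadruple `a b c d` is (ignoring loops) an induced `2K_2`
(edges `ab` and `cd` only). -/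
def Is2K2 (adj : V → V → Prop) (a b c d : V) : Prop :=
  adj a b ∧ adj c d ∧ ¬ adj a c ∧ ¬ adj a d ∧ ¬ adj b c ∧ ¬ adj b d

/-- The four vertices `a, b, c, d` are distinct and the set `{a,b,c,d}` induces a `C4`. -/
def InducesC4 (adj : V → V → Prop) (a b c d : V) : Prop :=
  [a, b, c, d].Nodup ∧
    ∃ p q r s : V, ({p, q, r, s} : Set V) = {a, b, c, d} ∧ IsC4 adj p q r s

/-- The four vertices `a, b, c, d` are distinct and the set `{a,b,c,d}` induces a `P4`. -/
def InducesP4 (adj : V → V → Prop) (a b c d : V) : Prop :=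
  [a, b, c, d].Nodup ∧
    ∃ p q r s : V, ({p, q, r, s} : Set V) = {a, b, c, d} ∧ IsP4 adj p q r s

/-- The four vertices `a, b, c, d` are distinct and the set `{a,b,c,d}` induces a `2K2`. -/
def Induces2K2 (adj : V → V → Prop) (a b c d : V) : Prop :=
  [a, b, c, d].Nodup ∧
    ∃ p q r s : V, ({p, q, r, s} : Set V) = {a, b, c, d} ∧ Is2K2 adj p q r s

/-- The edge `uu'` avoids the edge `vv'` (both possibly loops, with
`{u,u'} ∩ {v,v'} = ∅`). -/
def Avoids (adj : V → V → Prop) (u u' v v' : V) : Prop :=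
  (u ≠ v ∧ u ≠ v' ∧ u' ≠ v ∧ u' ≠ v') ∧
  ((u = u' ∧ v = v' ∧ ¬ adj u v) ∨
   (u = u' ∧ v ≠ v' ∧ ¬ adj u v ∧ ¬ adj u v') ∨
   (u ≠ u' ∧ v = v' ∧ ¬ adj u v ∧ ¬ adj u' v) ∨
   (u ≠ u' ∧ v ≠ v' ∧
     (Induces2K2 adj u u' v v' ∨ InducesP4 adj u u' v v' ∨ InducesC4 adj u u' v v')))

/-- `w 0, w 1, …, w t` is a walk in `G`. -/
def IsWalkOn (adj : V → V → Prop) (t : ℕ) (w : ℕ → V) : Prop :=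
  ∀ i < t, adj (w i) (w (i+1))

/-- The edge `xy` avoids every edge of the walk `w 0, …, w t`. -/
def EdgeAvoidsWalk (adj : V → V → Prop) (x y : V) (t : ℕ) (w : ℕ → V) : Prop :=
  ∀ i < t, Avoids adj x y (w i) (w (i+1))

/-- A weak edge-asteroid: edges `x_i y_i`, `i ∈ ZMod (2k+1)`, such that each `x_i y_i`
avoids a walk beginning with the edge `x_{i+k} y_{i+k}` and ending with the edge
`x_{i+k+1} y_{i+k+1}`. -/
def WeakEdgeAsteroid (adj : V → V → Prop) (k : ℕ) (x y : ZMod (2*k+1) → V) : Prop :=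
  (∀ i, adj (x i) (y i)) ∧
  ∀ i : ZMod (2*k+1), ∃ (t : ℕ) (w : ℕ → V), 1 ≤ t ∧
    IsWalkOn adj t w ∧
    ((w 0 = x (i + (k : ZMod (2*k+1))) ∧ w 1 = y (i + (k : ZMod (2*k+1)))) ∨
     (w 0 = y (i + (k : ZMod (2*k+1))) ∧ w 1 = x (i + (k : ZMod (2*k+1))))) ∧
    ((w (t-1) = x (i + (k : ZMod (2*k+1)) + 1) ∧ w t = y (i + (k : ZMod (2*k+1)) + 1)) ∨
     (w (t-1) = y (i + (k : ZMod (2*k+1)) + 1) ∧ w t = x (i + (k : ZMod (2*k+1)) + 1))) ∧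
    EdgeAvoidsWalk adj (x i) (y i) t w

/-- An asteroid: vertices `x_i`, `i ∈ ZMod (2k+1)`, such that for each `i` there is a walk
connecting `x_{i+k}` and `x_{i+k+1}` containing no neighbour of `x_i`. -/
def Asteroid (adj : V → V → Prop) (k : ℕ) (x : ZMod (2*k+1) → V) : Prop :=
  ∀ i : ZMod (2*k+1), ∃ (t : ℕ) (w : ℕ → V),
    w 0 = x (i + (k : ZMod (2*k+1))) ∧ w t = x (i + (k : ZMod (2*k+1)) + 1) ∧
    IsWalkOn adj t w ∧
    ∀ j ≤ t, ¬ adj (x i) (w j)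

/-- A bigraph with biadjacency relation `A` is a cocomparability bigraph: its biadjacency
matrix has a `Slash`-free ordering. -/
def IsCocompBigraph {X Y : Type*} (A : X → Y → Prop) : Prop :=
  ∃ (ltX : X → X → Prop) (ltY : Y → Y → Prop),
    IsStrictTotalOrder X ltX ∧ IsStrictTotalOrder Y ltY ∧
    ∀ x1 x2 y1 y2, ltX x1 x2 → ltY y1 y2 →
      ¬(¬ A x1 y1 ∧ A x1 y2 ∧ A x2 y1 ∧ ¬ A x2 y2)

/-- The edge set of `G` (as unordered pairs, including loops). -/
def GEdgeSet (adj : V → V → Prop) : Set (Sym2 V) := {e | ∃ u v, e = s(u, v) ∧ adj u v}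

/-- Adjacency in the avoidance graph `G*`: two edges of `G` are adjacent iff they avoid
each other. -/
def AdjStar (adj : V → V → Prop) (e f : Sym2 V) : Prop :=
  ∃ u u' v v', e = s(u, u') ∧ f = s(v, v') ∧ Avoids adj u u' v v'

/-!
Since `vv'` avoids every edge of the walk, no walk vertex is adjacent to both `v` and `v'`,
consecutive walk vertices have no common neighbour in `{v, v'}`, and they are adjacent to
different ends of `vv'` only if together with `v, v'` they induce a `C4`. For `a, z ∈ {v, v'}`
the pair `(u i, a)` forces `(u (i+1), z)` as soon as `a` misses `u (i+1)` and `z` misses `u i`,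
and forces `(u i, b)` when `u i` misses both `a` and `b`. Induction along the walk gives
`(u 0, x) ~ (u (m+1), z)` for every `z` missing `u m`; excluding a `C4` at the first and at the
last edge is exactly what is needed to start from any `x` and to end at any `y`.
-/

section ImpliesRel

variable {V : Type*} {adj : V → V → Prop}

theorem ImpliesRel.refl {p : V × V} (h : p.1 ≠ p.2) : ImpliesRel adj p p :=
  ⟨0, fun _ => p.1, fun _ => p.2, rfl, rfl, fun _ hi => absurd hi (Nat.not_lt_zero _),
    fun _ hi => absurd hi (Nat.not_lt_zero _), fun _ _ => h,
    fun _ hi => absurd hi (Nat.not_lt_zero _)⟩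

theorem ImpliesRel.snoc {p q r : V × V} (h : ImpliesRel adj p q) (h₁ : adj q.1 r.1)
    (h₂ : adj q.2 r.2) (hr : r.1 ≠ r.2) (hf : Forces adj q r) : ImpliesRel adj p r := by
  obtain ⟨k, u, v, rfl, rfl, hu, hv, hne, hforces⟩ := h
  refine ⟨k + 1, fun n => if n ≤ k then u n else r.1, fun n => if n ≤ k then v n else r.2,
    by simp, by simp, ?_, ?_, ?_, ?_⟩ <;> intro i hi
  · rcases Nat.lt_succ_iff_lt_or_eq.mp hi with hi | rfl
    · simpa [hi.le, Nat.succ_le_of_lt hi] using hu i hi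
    · simpa using h₁
  · rcases Nat.lt_succ_iff_lt_or_eq.mp hi with hi | rfl
    · simpa [hi.le, Nat.succ_le_of_lt hi] using hv i hi
    · simpa using h₂
  · dsimp only
    split_ifs with hik
    exacts [hne i hik, hr]
  · rcases Nat.lt_succ_iff_lt_or_eq.mp hi with hi | rfl
    · simpa [hi.le, Nat.succ_le_of_lt hi] using hforces i hi
    · simpa using hf

theorem ImpliesRel.swap_snd (hsymm : Symmetric adj) (hrefl : Reflexive adj) {p : V × V}
    {w a b : V} (h : ImpliesRel adj p (w, a))
    (hab : adj a b) (hwb : w ≠ b) (hwa : ¬adj w a) (hnwb : ¬adj w b) :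
    ImpliesRel adj p (w, b) :=
  h.snoc (hrefl w) hab hwb (Or.inr ⟨hrefl w, hab, hnwb, fun h => hwa (hsymm h)⟩)

end ImpliesRel

section FourVertices

variable {V : Type*} {adj : V → V → Prop} {p q r s : V}

theorem InducesC4.swap_pairs {a b c d : V} (h : InducesC4 adj a b c d) :
    InducesC4 adj c d a b := by
  obtain ⟨hnd, p, q, r, s, hQ, hC4⟩ := h
  refine ⟨(List.perm_append_comm (l₁ := [a, b]) (l₂ := [c, d])).nodup_iff.mp hnd,
    p, q, r, s, ?_, hC4⟩
  rw [hQ]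
  ext z
  simp only [Set.mem_insert_iff, Set.mem_singleton_iff]
  tauto

theorem not_triangle_of_mem (hsymm : Symmetric adj) (hpr : ¬adj p r) (hqs : ¬adj q s)
    {x y z : V} (hx : x ∈ ({p, q, r, s} : Set V)) (hy : y ∈ ({p, q, r, s} : Set V))
    (hz : z ∈ ({p, q, r, s} : Set V)) (hxy : x ≠ y) (hxz : x ≠ z) (hyz : y ≠ z) :
    ¬(adj x y ∧ adj y z ∧ adj z x) := by
  have hrp : ¬adj r p := fun h => hpr (hsymm h)
  have hsq : ¬adj s q := fun h => hqs (hsymm h)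
  rintro ⟨hxy', hyz', hzx'⟩
  simp only [Set.mem_insert_iff, Set.mem_singleton_iff] at hx hy hz
  rcases hx with rfl | rfl | rfl | rfl <;> rcases hy with rfl | rfl | rfl | rfl <;>
    rcases hz with rfl | rfl | rfl | rfl <;> contradiction

theorem not_cycle_of_mem (hsymm : Symmetric adj) (hpr : ¬adj p r) (hqs : ¬adj q s)
    (hps : ¬adj p s) {a b c d : V} (ha : a ∈ ({p, q, r, s} : Set V))
    (hb : b ∈ ({p, q, r, s} : Set V)) (hc : c ∈ ({p, q, r, s} : Set V))
    (hd : d ∈ ({p, q, r, s} : Set V)) (hab : a ≠ b) (hac : a ≠ c) (had : a ≠ d)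
    (hbc : b ≠ c) (hbd : b ≠ d) (hcd : c ≠ d) :
    ¬(adj a b ∧ adj b c ∧ adj c d ∧ adj d a) := by
  have hrp : ¬adj r p := fun h => hpr (hsymm h)
  have hsq : ¬adj s q := fun h => hqs (hsymm h)
  have hsp : ¬adj s p := fun h => hps (hsymm h)
  rintro ⟨hab', hbc', hcd', hda'⟩
  simp only [Set.mem_insert_iff, Set.mem_singleton_iff] at ha hb hc hd
  rcases ha with rfl | rfl | rfl | rfl <;> rcases hb with rfl | rfl | rfl | rfl <;>
    rcases hc with rfl | rfl | rfl | rfl <;> rcases hd with rfl | rfl | rfl | rfl <;>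
    contradiction

end FourVertices

section Avoids

variable {V : Type*} {adj : V → V → Prop} {v v' w w' a b z : V}

theorem Avoids.ne (h : Avoids adj v v' w w') (hz : z = w ∨ z = w') (ha : a = v ∨ a = v') :
    z ≠ a := by
  obtain ⟨⟨h₁, h₂, h₃, h₄⟩, -⟩ := h
  rcases hz with rfl | rfl <;> rcases ha with rfl | rfl
  exacts [h₁.symm, h₃.symm, h₂.symm, h₄.symm]

theorem Avoids.cases (hsymm : Symmetric adj) (h : Avoids adj v v' w w') :
    (∀ a z, (a = v ∨ a = v') → (z = w ∨ z = w') → ¬adj z a) ∨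
    (v ≠ v' ∧ w ≠ w' ∧ ∃ p q r s : V, {v, v', w, w'} ⊆ ({p, q, r, s} : Set V) ∧
      ¬adj p r ∧ ¬adj q s ∧ (¬adj p s ∨ InducesC4 adj v v' w w')) := by
  obtain ⟨-, ⟨rfl, rfl, _⟩ | ⟨rfl, -, _, _⟩ | ⟨-, rfl, _, _⟩ | ⟨hvv, hww, hind⟩⟩ := h
  iterate 3
    left
    rintro a z (rfl | rfl) (rfl | rfl) hza <;> exact absurd (hsymm hza) (by assumption)
  right
  refine ⟨hvv, hww, ?_⟩
  -- `p r` and `q s` are non-edges of an induced `2K2`, `P4` or `C4`, and `p s` is one unless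
  -- the shape is a `C4`
  rcases hind with ⟨-, p, q, r, s, hQ, -, -, hpr, hps, -, hqs⟩ |
    ⟨-, p, q, r, s, hQ, -, -, -, hpr, hps, hqs⟩ | hC4
  · exact ⟨p, q, r, s, hQ.symm.subset, hpr, hqs, Or.inl hps⟩
  · exact ⟨p, q, r, s, hQ.symm.subset, hpr, hqs, Or.inl hps⟩
  · have ⟨_, p, q, r, s, hQ, _, _, _, _, hpr, hqs⟩ := hC4
    exact ⟨p, q, r, s, hQ.symm.subset, hpr, hqs, Or.inr hC4⟩

theorem Avoids.exists_not_adj (hsymm : Symmetric adj) (hv : adj v v')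
    (h : Avoids adj v v' w w') (hz : z = w ∨ z = w') :
    ∃ a, (a = v ∨ a = v') ∧ ¬adj z a := by
  by_contra! hall
  rcases h.cases hsymm with hnone | ⟨hvv, -, p, q, r, s, hQ, hpr, hqs, -⟩
  · exact hnone v z (Or.inl rfl) hz (hall v (Or.inl rfl))
  · exact not_triangle_of_mem hsymm hpr hqs (hQ (by rcases hz with rfl | rfl <;> simp))
      (hQ (by simp)) (hQ (by simp)) (h.ne hz (Or.inl rfl)) (h.ne hz (Or.inr rfl)) hvv
      ⟨hall v (Or.inl rfl), hv, hsymm (hall v' (Or.inr rfl))⟩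

theorem Avoids.not_adj_common (hsymm : Symmetric adj) (hw : adj w w') (h : Avoids adj v v' w w')
    (ha : a = v ∨ a = v') : ¬(adj w a ∧ adj w' a) := by
  rintro ⟨hwa, hw'a⟩
  rcases h.cases hsymm with hnone | ⟨-, hww, p, q, r, s, hQ, hpr, hqs, -⟩
  · exact hnone a w ha (Or.inl rfl) hwa
  · exact not_triangle_of_mem hsymm hpr hqs (hQ (by simp)) (hQ (by simp))
      (hQ (by rcases ha with rfl | rfl <;> simp)) hww (h.ne (Or.inl rfl) ha)
      (h.ne (Or.inr rfl) ha) ⟨hw, hw'a, hsymm hwa⟩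

theorem Avoids.not_adj_cross (hsymm : Symmetric adj) (hv : adj v v') (hw : adj w w')
    (h : Avoids adj v v' w w') (hC4 : ¬InducesC4 adj v v' w w') (ha : a = v ∨ a = v')
    (hb : b = v ∨ b = v') (hab : a ≠ b) : ¬(adj w a ∧ adj w' b) := by
  rintro ⟨hwa, hw'b⟩
  have hadj : adj a b := by
    rcases ha with rfl | rfl <;> rcases hb with rfl | rfl
    exacts [absurd rfl hab, hv, hsymm hv, absurd rfl hab]
  rcases h.cases hsymm with hnone | ⟨-, hww, p, q, r, s, hQ, hpr, hqs, hps | hC4'⟩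
  · exact hnone a w ha (Or.inl rfl) hwa
  · exact not_cycle_of_mem hsymm hpr hqs hps (hQ (by simp))
      (hQ (by rcases ha with rfl | rfl <;> simp)) (hQ (by rcases hb with rfl | rfl <;> simp))
      (hQ (by simp)) (h.ne (Or.inl rfl) ha) (h.ne (Or.inl rfl) hb) hww hab
      (h.ne (Or.inr rfl) ha).symm (h.ne (Or.inr rfl) hb).symm
      ⟨hwa, hadj, hsymm hw'b, hsymm hw⟩
  · exact hC4 hC4'

end Avoids

section Walk

variable {V : Type*} {adj : V → V → Prop} {v v' : V} {t : ℕ} {u : ℕ → V}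

theorem adj_of_mem_pair (hsymm : Symmetric adj) (hrefl : Reflexive adj) (hv : adj v v')
    {a b : V} (ha : a = v ∨ a = v') (hb : b = v ∨ b = v') : adj a b := by
  rcases ha with rfl | rfl <;> rcases hb with rfl | rfl
  exacts [hrefl _, hv, hsymm hv, hrefl _]

theorem impliesRel_walk_succ (hsymm : Symmetric adj) (hrefl : Reflexive adj)
    (hv : adj v v') (hwalk : IsWalkOn adj t u) (havoid : EdgeAvoidsWalk adj v v' t u)
    {P : V × V} {i : ℕ} (hi : i < t)
    (hex : ∃ a, (a = v ∨ a = v') ∧ ImpliesRel adj P (u i, a) ∧ ¬adj (u (i + 1)) a)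
    {z : V} (hz : z = v ∨ z = v') (hiz : ¬adj (u i) z) : ImpliesRel adj P (u (i + 1), z) := by
  obtain ⟨a, ha, hreach, hna⟩ := hex
  have haz := adj_of_mem_pair hsymm hrefl hv ha hz
  exact hreach.snoc (hwalk i hi) haz ((havoid i hi).ne (Or.inr rfl) hz)
    (Or.inr ⟨hwalk i hi, haz, hiz, fun h => hna (hsymm h)⟩)

theorem exists_impliesRel_start (hsymm : Symmetric adj) (hrefl : Reflexive adj)
    (hv : adj v v') (hwalk : IsWalkOn adj t u) (havoid : EdgeAvoidsWalk adj v v' t u)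
    (ht : 0 < t) (hC4 : ¬InducesC4 adj v v' (u 0) (u 1)) {x : V} (hx : x = v ∨ x = v') :
    ∃ a, (a = v ∨ a = v') ∧ ImpliesRel adj (u 0, x) (u 0, a) ∧ ¬adj (u 1) a := by
  have hstay : ImpliesRel adj (u 0, x) (u 0, x) := .refl ((havoid 0 ht).ne (Or.inl rfl) hx)
  by_cases h1x : adj (u 1) x
  · obtain ⟨c, hc, h1c⟩ := (havoid 0 ht).exists_not_adj hsymm hv (Or.inr rfl)
    have hcx : c ≠ x := fun h => h1c (h ▸ h1x)
    refine ⟨c, hc, hstay.swap_snd hsymm hrefl (adj_of_mem_pair hsymm hrefl hv hx hc)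
      ((havoid 0 ht).ne (Or.inl rfl) hc) ?_ ?_, h1c⟩
    · exact fun h0x => (havoid 0 ht).not_adj_common hsymm (hwalk 0 ht) hx ⟨h0x, h1x⟩
    · exact fun h0c =>
        (havoid 0 ht).not_adj_cross hsymm hv (hwalk 0 ht) hC4 hc hx hcx ⟨h0c, h1x⟩
  · exact ⟨x, hx, hstay, h1x⟩

theorem exists_impliesRel_succ (hsymm : Symmetric adj) (hrefl : Reflexive adj)
    (hv : adj v v') (hwalk : IsWalkOn adj t u) (havoid : EdgeAvoidsWalk adj v v' t u)
    {P : V × V} {m : ℕ} (hm : m + 1 < t)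
    (hreach : ∀ z, (z = v ∨ z = v') → ¬adj (u m) z → ImpliesRel adj P (u (m + 1), z)) :
    ∃ a, (a = v ∨ a = v') ∧ ImpliesRel adj P (u (m + 1), a) ∧ ¬adj (u (m + 1 + 1)) a := by
  have hm' : m < t := Nat.lt_of_succ_lt hm
  obtain ⟨c', hc', h2c'⟩ := (havoid (m + 1) hm).exists_not_adj hsymm hv (Or.inr rfl)
  by_cases h0c' : adj (u m) c'
  · obtain ⟨c, hc, h0c⟩ := (havoid m hm').exists_not_adj hsymm hv (Or.inl rfl)
    by_cases h2c : adj (u (m + 1 + 1)) c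
    · refine ⟨c', hc', (hreach c hc h0c).swap_snd hsymm hrefl
        (adj_of_mem_pair hsymm hrefl hv hc hc') ((havoid (m + 1) hm).ne (Or.inl rfl) hc') ?_ ?_,
        h2c'⟩
      · exact fun h1c => (havoid (m + 1) hm).not_adj_common hsymm (hwalk _ hm) hc ⟨h1c, h2c⟩
      · exact fun h1c' => (havoid m hm').not_adj_common hsymm (hwalk m hm') hc' ⟨h0c', h1c'⟩
    · exact ⟨c, hc, hreach c hc h0c, h2c⟩
  · exact ⟨c', hc', hreach c' hc' h0c', h2c'⟩

theorem impliesRel_of_not_adj_prev (hsymm : Symmetric adj) (hrefl : Reflexive adj)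
    (hv : adj v v') (hwalk : IsWalkOn adj t u) (havoid : EdgeAvoidsWalk adj v v' t u)
    (hC4 : ¬InducesC4 adj v v' (u 0) (u 1)) {x : V} (hx : x = v ∨ x = v') :
    ∀ m < t, ∀ z, (z = v ∨ z = v') → ¬adj (u m) z →
      ImpliesRel adj (u 0, x) (u (m + 1), z) := by
  intro m
  induction m with
  | zero =>
    intro ht
    exact fun z hz => impliesRel_walk_succ hsymm hrefl hv hwalk havoid ht
      (exists_impliesRel_start hsymm hrefl hv hwalk havoid ht hC4 hx) hz
  | succ m ih =>
    intro hm
    exact fun z hz => impliesRel_walk_succ hsymm hrefl hv hwalk havoid hm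
      (exists_impliesRel_succ hsymm hrefl hv hwalk havoid hm (ih (Nat.lt_of_succ_lt hm))) hz

theorem impliesRel_end (hsymm : Symmetric adj) (hrefl : Reflexive adj)
    (hv : adj v v') (hwalk : IsWalkOn adj t u) (havoid : EdgeAvoidsWalk adj v v' t u)
    {P : V × V} {s : ℕ} (hs : s < t) (hC4 : ¬InducesC4 adj v v' (u s) (u (s + 1)))
    (hreach : ∀ z, (z = v ∨ z = v') → ¬adj (u s) z → ImpliesRel adj P (u (s + 1), z))
    {y : V} (hy : y = v ∨ y = v') : ImpliesRel adj P (u (s + 1), y) := by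
  by_cases hsy : adj (u s) y
  · obtain ⟨c, hc, hsc⟩ := (havoid s hs).exists_not_adj hsymm hv (Or.inl rfl)
    have hyc : y ≠ c := fun h => hsc (h ▸ hsy)
    refine (hreach c hc hsc).swap_snd hsymm hrefl (adj_of_mem_pair hsymm hrefl hv hc hy)
      ((havoid s hs).ne (Or.inr rfl) hy) ?_ ?_
    · exact fun h => (havoid s hs).not_adj_cross hsymm hv (hwalk s hs) hC4 hy hc hyc ⟨hsy, h⟩
    · exact fun h => (havoid s hs).not_adj_common hsymm (hwalk s hs) hy ⟨hsy, h⟩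
  · exact hreach y hy hsy

end Walk

theorem align_no_C4_general
    {V : Type*} (adj : V → V → Prop)
    (hsymm : Symmetric adj) (hrefl : Reflexive adj)
    (v v' : V) (hedge : adj v v')
    (t : ℕ) (ht : 1 ≤ t) (u : ℕ → V)
    (hwalk : IsWalkOn adj t u)
    (havoid : EdgeAvoidsWalk adj v v' t u)
    (h1 : ¬ InducesC4 adj (u 0) (u 1) v v')
    (h2 : ¬ InducesC4 adj (u (t-1)) (u t) v v') :
    ∀ x y : V, (x = v ∨ x = v') → (y = v ∨ y = v') →
      ImpliesRel adj (u 0, x) (u t, y) := by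
  intro x y hx hy
  obtain ⟨s, rfl⟩ := Nat.exists_eq_add_of_le' ht
  rw [Nat.add_sub_cancel] at h2
  have hstart : ¬InducesC4 adj v v' (u 0) (u 1) := fun h => h1 h.swap_pairs
  have hend : ¬InducesC4 adj v v' (u s) (u (s + 1)) := fun h => h2 h.swap_pairs
  exact impliesRel_end hsymm hrefl hedge hwalk havoid s.lt_succ_self hend
    (impliesRel_of_not_adj_prev hsymm hrefl hedge hwalk havoid hstart hx s s.lt_succ_self) hy

/-- **Lemma (Statement 3).** If the edge `vv'` avoids the walk `u 0, u 1, …, u t` (`t ≥ 1`)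
and neither `{u 0, u 1, v, v'}` nor `{u (t-1), u t, v, v'}` induces a `C4`, then for any
`x ∈ {v,v'}` and `y ∈ {v,v'}` we have `(u 0, x) ~ (u t, y)`. -/
theorem align_no_C4
    {V : Type*} [Fintype V] (adj : V → V → Prop)
    (hsymm : Symmetric adj) (hrefl : Reflexive adj)
    (v v' : V) (hedge : adj v v')
    (t : ℕ) (ht : 1 ≤ t) (u : ℕ → V)
    (hwalk : IsWalkOn adj t u)
    (havoid : EdgeAvoidsWalk adj v v' t u)
    (h1 : ¬ InducesC4 adj (u 0) (u 1) v v')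
    (h2 : ¬ InducesC4 adj (u (t-1)) (u t) v v') :
    ∀ x y : V, (x = v ∨ x = v') → (y = v ∨ y = v') →
      ImpliesRel adj (u 0, x) (u t, y) :=
  align_no_C4_general adj hsymm hrefl v v' hedge t ht u hwalk havoid h1 h2
end

section
/- Let G be a reflexive graph and suppose that an edge vv' of G avoids every edge of a walk u_0 u_1 … u_t in G, where t ≥ 1. If {u_0, u_1, v, v'} induces a C4 in G and {u_{t-1}, u_t, v, v'} does not induce a C4 in G, then for any y ∈ {v, v'}, (u_0, x) ~ (u_t, y), where x is the unique vertex in {v, v'} with u_0x ∈ E(G). -/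
/-!
Common definitions.  A reflexive graph on a finite vertex type `V` is given by a
symmetric, reflexive adjacency relation `adj : V → V → Prop`; the edge set consists
of all pairs (including loops `v v`) with `adj u v`.
-/

variable {V : Type*}

/-!
Write `S = {v, v'}`. Because `vv'` avoids the edge `u i u (i+1)`, no vertex of
`{v, v', u i, u (i+1)}` is adjacent to all four; hence every `u i` has at most one neighbour
in `S`, and consecutive vertices of the walk have no common neighbour in `S`.

Walking along `u`, one shows that `(u 0, x) ~ (u (i+1), z)` for every `z ∈ S` not adjacent to
`u i`: pass through `(u i, w)`, where `w` is the neighbour of `u i` in `S` if it has one;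
otherwise `u i` sees nothing of `S`, so `(u i, w) Λ (u i, w')` for all `w, w' ∈ S` and `w`
can be chosen freely. At the end of the walk, if `u t` has a neighbour in `S` then `u (t-1)`
has none, since otherwise `{u (t-1), u t, v, v'}` would induce a `C4`.
-/

section

variable {adj : V → V → Prop}

theorem adj_of_mem_pair_s4 (hsymm : Symmetric adj) (hrefl : Reflexive adj) {v v' z w : V}
    (hvv' : adj v v') (hz : z ∈ ({v, v'} : Set V)) (hw : w ∈ ({v, v'} : Set V)) : adj z w := by
  rcases hz with rfl | rfl <;> rcases hw with rfl | rfl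
  exacts [hrefl _, hvv', hsymm hvv', hrefl _]

theorem exists_mem_pair_not_adj {a v v' : V} (h : ¬ (adj a v ∧ adj a v')) :
    ∃ z ∈ ({v, v'} : Set V), ¬ adj a z := by
  by_cases hav : adj a v
  · exact ⟨v', by simp, fun hav' => h ⟨hav, hav'⟩⟩
  · exact ⟨v, by simp, hav⟩

theorem ImpliesRel.refl_s4 {a b : V} (h : a ≠ b) : ImpliesRel adj (a, b) (a, b) :=
  ⟨0, fun _ => a, fun _ => b, rfl, rfl, fun _ hi => absurd hi (Nat.not_lt_zero _),
    fun _ hi => absurd hi (Nat.not_lt_zero _), fun _ _ => h,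
    fun _ hi => absurd hi (Nat.not_lt_zero _)⟩

theorem ImpliesRel.tail {p : V × V} {a b c d : V} (h : ImpliesRel adj p (a, b))
    (hac : adj a c) (hbd : adj b d) (had : ¬ adj a d) (hbc : ¬ adj b c) :
    ImpliesRel adj p (c, d) := by
  obtain ⟨k, u, w, hp, hk, hu, hw, hne, hf⟩ := h
  obtain ⟨rfl, rfl⟩ := Prod.mk.inj hk
  refine ⟨k + 1, fun i => if i ≤ k then u i else c, fun i => if i ≤ k then w i else d,
    by simpa using hp, by simp, ?_, ?_, ?_, ?_⟩
  · intro i hi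
    rcases Nat.lt_succ_iff_lt_or_eq.mp hi with hi | rfl
    · simpa [hi.le, Nat.succ_le_of_lt hi] using hu i hi
    · simpa using hac
  · intro i hi
    rcases Nat.lt_succ_iff_lt_or_eq.mp hi with hi | rfl
    · simpa [hi.le, Nat.succ_le_of_lt hi] using hw i hi
    · simpa using hbd
  · intro i hi
    rcases Nat.lt_succ_iff_lt_or_eq.mp (Nat.lt_succ_of_le hi) with hi | rfl
    · simpa [Nat.le_of_lt_succ hi] using hne i (Nat.le_of_lt_succ hi)
    · simp only [Nat.not_succ_le_self, if_false]
      rintro rfl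
      exact hbc hbd
  · intro i hi
    rcases Nat.lt_succ_iff_lt_or_eq.mp hi with hi | rfl
    · simpa [hi.le, Nat.succ_le_of_lt hi] using hf i hi
    · simp only [le_refl, if_true, Nat.not_succ_le_self, if_false]
      exact Or.inr ⟨hac, hbd, had, hbc⟩

theorem ImpliesRel.of_forall_not_adj (hsymm : Symmetric adj) (hrefl : Reflexive adj)
    {p : V × V} {a v v' w : V} (hvv' : adj v v') (hw : w ∈ ({v, v'} : Set V))
    (h : ImpliesRel adj p (a, w)) (ha : ∀ z ∈ ({v, v'} : Set V), ¬ adj a z) :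
    ∀ z ∈ ({v, v'} : Set V), ImpliesRel adj p (a, z) := by
  intro z hz
  exact h.tail (hrefl a) (adj_of_mem_pair_s4 hsymm hrefl hvv' hw hz) (ha z hz)
    fun hwa => ha w hw (hsymm hwa)

theorem not_forall_adj_of_antipodal (hsymm : Symmetric adj) {p q r s x : V}
    (hpr : ¬ adj p r) (hqs : ¬ adj q s) (hx : x ∈ ({p, q, r, s} : Set V)) :
    ¬ ∀ z ∈ ({p, q, r, s} : Set V), adj x z := by
  intro hall
  rcases hx with rfl | rfl | rfl | rfl
  · exact hpr (hall r (by simp))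
  · exact hqs (hall s (by simp))
  · exact hpr (hsymm (hall p (by simp)))
  · exact hqs (hsymm (hall q (by simp)))

theorem Avoids.not_forall_adj (hsymm : Symmetric adj) {v v' a b x : V}
    (h : Avoids adj v v' a b) (hx : x ∈ ({v, v', a, b} : Set V)) :
    ¬ ∀ z ∈ ({v, v', a, b} : Set V), adj x z := by
  obtain ⟨-, h⟩ := h
  rcases h with ⟨rfl, rfl, hva⟩ | ⟨rfl, -, hva, hvb⟩ | ⟨-, rfl, hva, hv'a⟩ | ⟨-, -, hI⟩
  · exact not_forall_adj_of_antipodal hsymm hva hva hx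
  · exact not_forall_adj_of_antipodal hsymm hva hvb hx
  · exact not_forall_adj_of_antipodal hsymm hva hv'a hx
  · obtain ⟨p, q, r, s, hset, hpr, hqs⟩ : ∃ p q r s : V,
        ({p, q, r, s} : Set V) = {v, v', a, b} ∧ ¬ adj p r ∧ ¬ adj q s := by
      rcases hI with ⟨-, p, q, r, s, hset, h⟩ | ⟨-, p, q, r, s, hset, h⟩ |
        ⟨-, p, q, r, s, hset, h⟩
      exacts [⟨p, q, r, s, hset, h.2.2.1, h.2.2.2.2.2⟩,
        ⟨p, q, r, s, hset, h.2.2.2.1, h.2.2.2.2.2⟩,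
        ⟨p, q, r, s, hset, h.2.2.2.2.1, h.2.2.2.2.2⟩]
    rw [← hset] at hx ⊢
    exact not_forall_adj_of_antipodal hsymm hpr hqs hx

theorem Avoids.not_adj_both (hsymm : Symmetric adj) (hrefl : Reflexive adj) {v v' a b x : V}
    (h : Avoids adj v v' a b) (hab : adj a b) (hx : x = a ∨ x = b) :
    ¬ (adj x v ∧ adj x v') := by
  rintro ⟨hxv, hxv'⟩
  have hxab : adj x a ∧ adj x b := by
    rcases hx with rfl | rfl
    exacts [⟨hrefl x, hab⟩, ⟨hsymm hab, hrefl x⟩]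
  refine h.not_forall_adj hsymm (x := x) (by rcases hx with rfl | rfl <;> simp) ?_
  rintro z (rfl | rfl | rfl | rfl)
  exacts [hxv, hxv', hxab.1, hxab.2]

theorem Avoids.not_adj_common_s4 (hsymm : Symmetric adj) (hrefl : Reflexive adj) {v v' a b z : V}
    (h : Avoids adj v v' a b) (hvv' : adj v v') (hz : z ∈ ({v, v'} : Set V)) :
    ¬ (adj a z ∧ adj b z) := by
  rintro ⟨haz, hbz⟩
  refine h.not_forall_adj hsymm (x := z) (by rcases hz with rfl | rfl <;> simp) ?_
  rintro w (rfl | rfl | rfl | rfl)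
  exacts [adj_of_mem_pair_s4 hsymm hrefl hvv' hz (by simp),
    adj_of_mem_pair_s4 hsymm hrefl hvv' hz (by simp), hsymm haz, hsymm hbz]

theorem inducesC4_of_cross (hsymm : Symmetric adj) (hrefl : Reflexive adj) {a b c d : V}
    (hab : adj a b) (hcd : adj c d) (hac : adj a c) (hbd : adj b d)
    (had : ¬ adj a d) (hbc : ¬ adj b c) : InducesC4 adj a b c d := by
  have hne : a ≠ b ∧ a ≠ c ∧ a ≠ d ∧ b ≠ c ∧ b ≠ d ∧ c ≠ d := by
    refine ⟨?_, ?_, ?_, ?_, ?_, ?_⟩ <;> rintro rfl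
    exacts [hbc hac, hbc (hsymm hab), had (hrefl a), hbc (hrefl b), had hab, had hac]
  refine ⟨by simpa [List.nodup_cons, and_assoc] using hne, a, b, d, c, ?_,
    hab, hbd, hsymm hcd, hsymm hac, had, hbc⟩
  ext
  simp only [Set.mem_insert_iff, Set.mem_singleton_iff]
  tauto

theorem InducesC4.swap {a b c d : V} (h : InducesC4 adj a b c d) : InducesC4 adj a b d c := by
  obtain ⟨hnd, p, q, r, s, hset, hC4⟩ := h
  refine ⟨(((List.Perm.swap c d []).cons b).cons a).nodup_iff.mpr hnd, p, q, r, s, ?_, hC4⟩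
  rw [hset, Set.pair_comm c d]

theorem inducesC4_of_cross_pair (hsymm : Symmetric adj) (hrefl : Reflexive adj)
    {a b v v' c d : V} (hab : adj a b) (hvv' : adj v v') (hc : c ∈ ({v, v'} : Set V))
    (hd : d ∈ ({v, v'} : Set V)) (hcd : c ≠ d) (hac : adj a c) (hbd : adj b d)
    (had : ¬ adj a d) (hbc : ¬ adj b c) : InducesC4 adj a b v v' := by
  rcases hc with rfl | rfl <;> rcases hd with rfl | rfl
  · exact absurd rfl hcd
  · exact inducesC4_of_cross hsymm hrefl hab hvv' hac hbd had hbc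
  · exact (inducesC4_of_cross hsymm hrefl hab (hsymm hvv') hac hbd had hbc).swap
  · exact absurd rfl hcd

theorem EdgeAvoidsWalk.not_adj_both (hsymm : Symmetric adj) (hrefl : Reflexive adj)
    {v v' : V} {t : ℕ} {u : ℕ → V} (h : EdgeAvoidsWalk adj v v' t u)
    (hwalk : IsWalkOn adj t u) (ht : 1 ≤ t) {i : ℕ} (hi : i ≤ t) :
    ¬ (adj (u i) v ∧ adj (u i) v') := by
  rcases hi.lt_or_eq with hi | rfl
  · exact (h i hi).not_adj_both hsymm hrefl (hwalk i hi) (Or.inl rfl)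
  · obtain ⟨n, rfl⟩ : ∃ n, i = n + 1 := ⟨i - 1, by omega⟩
    exact (h n n.lt_succ_self).not_adj_both hsymm hrefl (hwalk n n.lt_succ_self) (Or.inr rfl)

theorem EdgeAvoidsWalk.impliesRel_of_not_adj (hsymm : Symmetric adj) (hrefl : Reflexive adj)
    {v v' x : V} {t : ℕ} {u : ℕ → V} (h : EdgeAvoidsWalk adj v v' t u) (hvv' : adj v v')
    (hwalk : IsWalkOn adj t u) (hx : x ∈ ({v, v'} : Set V)) (hux : adj (u 0) x) :
    ∀ n < t, ∀ z ∈ ({v, v'} : Set V), ¬ adj (u n) z →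
      ImpliesRel adj (u 0, x) (u (n + 1), z) := by
  intro n
  induction n with
  | zero =>
    intro ht z hz hnz
    have hxz := adj_of_mem_pair_s4 hsymm hrefl hvv' hx hz
    have hne : u 0 ≠ x := fun h0 => hnz (h0 ▸ hxz)
    exact (ImpliesRel.refl_s4 hne).tail (hwalk 0 ht) hxz hnz
      fun hx1 => (h 0 ht).not_adj_common_s4 hsymm hrefl hvv' hx ⟨hux, hsymm hx1⟩
  | succ n ih =>
    intro hn z hz hnz
    have hboth := fun i (hi : i ≤ t) => h.not_adj_both hsymm hrefl hwalk (by omega) hi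
    obtain ⟨w, hw, hRw, hwn⟩ : ∃ w ∈ ({v, v'} : Set V),
        ImpliesRel adj (u 0, x) (u (n + 1), w) ∧ ¬ adj w (u (n + 2)) := by
      by_cases hb : ∃ b ∈ ({v, v'} : Set V), adj (u (n + 1)) b
      · obtain ⟨b, hb, hub⟩ := hb
        refine ⟨b, hb, ih (by omega) b hb fun hnb => ?_, fun hbn => ?_⟩
        · exact (h n (by omega)).not_adj_common_s4 hsymm hrefl hvv' hb ⟨hnb, hub⟩
        · exact (h (n + 1) hn).not_adj_common_s4 hsymm hrefl hvv' hb ⟨hub, hsymm hbn⟩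
      · push Not at hb
        obtain ⟨w₀, hw₀, hnw₀⟩ := exists_mem_pair_not_adj (hboth n (by omega))
        obtain ⟨w, hw, hnw⟩ := exists_mem_pair_not_adj (hboth (n + 2) hn)
        exact ⟨w, hw, (ih (by omega) w₀ hw₀ hnw₀).of_forall_not_adj hsymm hrefl hvv' hw₀ hb w hw,
          fun hwn => hnw (hsymm hwn)⟩
    exact hRw.tail (hwalk (n + 1) hn) (adj_of_mem_pair_s4 hsymm hrefl hvv' hw hz) hnz hwn

end

theorem align_C4_start_general
    {V : Type*} (adj : V → V → Prop)
    (hsymm : Symmetric adj) (hrefl : Reflexive adj)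
    (v v' : V) (hedge : adj v v')
    (t : ℕ) (ht : 1 ≤ t) (u : ℕ → V)
    (hwalk : IsWalkOn adj t u)
    (havoid : EdgeAvoidsWalk adj v v' t u)
    (h2 : ¬ InducesC4 adj (u (t-1)) (u t) v v') :
    ∀ x : V, (x = v ∨ x = v') → adj (u 0) x →
      ∀ y : V, (y = v ∨ y = v') →
        ImpliesRel adj (u 0, x) (u t, y) := by
  intro x hx hux y hy
  obtain ⟨n, rfl⟩ : ∃ n, t = n + 1 := ⟨t - 1, by omega⟩
  have hreach := havoid.impliesRel_of_not_adj hsymm hrefl hedge hwalk hx hux n n.lt_succ_self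
  by_cases hb : ∃ b ∈ ({v, v'} : Set V), adj (u (n + 1)) b
  · obtain ⟨b, hb, hub⟩ := hb
    refine hreach y hy fun hny => ?_
    have hcommon : ∀ z ∈ ({v, v'} : Set V), ¬ (adj (u n) z ∧ adj (u (n + 1)) z) :=
      fun z hz => (havoid n n.lt_succ_self).not_adj_common_s4 hsymm hrefl hedge hz
    rcases eq_or_ne y b with rfl | hyb
    · exact hcommon y hy ⟨hny, hub⟩
    · exact h2 (inducesC4_of_cross_pair hsymm hrefl (hwalk n n.lt_succ_self) hedge hy hb hyb
        hny hub (fun h => hcommon b hb ⟨h, hub⟩) (fun h => hcommon y hy ⟨hny, h⟩))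
  · push Not at hb
    obtain ⟨w, hw, hnw⟩ :=
      exists_mem_pair_not_adj (havoid.not_adj_both hsymm hrefl hwalk ht n.le_succ)
    exact (hreach w hw hnw).of_forall_not_adj hsymm hrefl hedge hw hb y hy

/-- **Lemma (Statement 4).** If the edge `vv'` avoids the walk `u 0, u 1, …, u t` (`t ≥ 1`),
`{u 0, u 1, v, v'}` induces a `C4` and `{u (t-1), u t, v, v'}` does not, then for any
`y ∈ {v,v'}` we have `(u 0, x) ~ (u t, y)`, where `x` is the (unique) vertex of `{v,v'}`
adjacent to `u 0`. -/
theorem align_C4_start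
    {V : Type*} [Fintype V] (adj : V → V → Prop)
    (hsymm : Symmetric adj) (hrefl : Reflexive adj)
    (v v' : V) (hedge : adj v v')
    (t : ℕ) (ht : 1 ≤ t) (u : ℕ → V)
    (hwalk : IsWalkOn adj t u)
    (havoid : EdgeAvoidsWalk adj v v' t u)
    (h1 : InducesC4 adj (u 0) (u 1) v v')
    (h2 : ¬ InducesC4 adj (u (t-1)) (u t) v v') :
    ∀ x : V, (x = v ∨ x = v') → adj (u 0) x →
      ∀ y : V, (y = v ∨ y = v') →
        ImpliesRel adj (u 0, x) (u t, y) :=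
  align_C4_start_general adj hsymm hrefl v v' hedge t ht u hwalk havoid h2
end

section
/- Let G be a reflexive graph and suppose that an edge vv' of G avoids every edge of a walk u_0 u_1 … u_t in G, where t ≥ 1. If both {u_0, u_1, v, v'} and {u_{t-1}, u_t, v, v'} induce a C4 in G, then (u_0, x) ~ (u_t, y), where x is the unique vertex in {v, v'} with u_0x ∈ E(G) and y is the unique vertex in {v, v'} with u_ty ∈ E(G). -/
/-!
Common definitions.  A reflexive graph on a finite vertex type `V` is given by a
symmetric, reflexive adjacency relation `adj : V → V → Prop`; the edge set consists
of all pairs (including loops `v v`) with `adj u v`.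
-/

variable {V : Type*}

/-!
Write `P = {v, v'}`. That `vv'` avoids a walk edge `ww'` means that `{v, v', w, w'}` spans
no triangle through `vv'` or `ww'`: each walk vertex has at most one neighbour in `P`, and
consecutive walk vertices have no common neighbour in `P`. So along the walk the second
coordinate can always move to the vertex of `P` not adjacent to the previous walk vertex,
and when the new walk vertex has no neighbour in `P` a forcing step with fixed first
coordinate switches the second one inside `P`. The invariant is that `(u 0, x)` reaches
`(u i, p)` for every `p ∈ P` whose partner in `P` is not adjacent to `u i`.
-/

variable {adj : V → V → Prop}

theorem not_triangle_of_induces (hsymm : Symmetric adj) {a b c d x y z : V}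
    (h : Induces2K2 adj a b c d ∨ InducesP4 adj a b c d ∨ InducesC4 adj a b c d)
    (hx : x ∈ ({a, b, c, d} : Set V)) (hy : y ∈ ({a, b, c, d} : Set V))
    (hz : z ∈ ({a, b, c, d} : Set V)) (hxy : x ≠ y) (hxz : x ≠ z) (hyz : y ≠ z) :
    ¬(adj x y ∧ adj x z ∧ adj y z) := by
  -- each of the three patterns has two disjoint non-edges covering its four vertices
  obtain ⟨p, q, r, s, hset, hpr, hqs⟩ :
      ∃ p q r s : V, ({p, q, r, s} : Set V) = {a, b, c, d} ∧ ¬adj p r ∧ ¬adj q s := by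
    rcases h with ⟨-, p, q, r, s, hs, hp⟩ | ⟨-, p, q, r, s, hs, hp⟩ | ⟨-, p, q, r, s, hs, hp⟩
    · exact ⟨p, q, r, s, hs, hp.2.2.1, hp.2.2.2.2.2⟩
    · exact ⟨p, q, r, s, hs, hp.2.2.2.1, hp.2.2.2.2.2⟩
    · exact ⟨p, q, r, s, hs, hp.2.2.2.2.1, hp.2.2.2.2.2⟩
  have hrp : ¬adj r p := fun h => hpr (hsymm h)
  have hsq : ¬adj s q := fun h => hqs (hsymm h)
  rw [← hset] at hx hy hz
  simp only [Set.mem_insert_iff, Set.mem_singleton_iff] at hx hy hz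
  rcases hx with rfl | rfl | rfl | rfl <;> rcases hy with rfl | rfl | rfl | rfl <;>
    rcases hz with rfl | rfl | rfl | rfl <;> tauto

namespace Avoids

variable {v v' w w' : V}

theorem not_adj_both_s5 (hsymm : Symmetric adj) (hv : adj v v') (h : Avoids adj v v' w w')
    {a : V} (ha : a = w ∨ a = w') : ¬(adj a v ∧ adj a v') := by
  rintro ⟨hav, hav'⟩
  have hva : ¬adj v a → False := fun hn => hn (hsymm hav)
  obtain ⟨⟨hvw, hvw', hv'w, hv'w'⟩, hcases⟩ := h
  rcases hcases with ⟨rfl, rfl, hn⟩ | ⟨rfl, -, hn, hn'⟩ | ⟨-, rfl, hn, -⟩ | ⟨hvv', -, hind⟩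
  · exact hva (by rcases ha with rfl | rfl <;> exact hn)
  · exact hva (by rcases ha with rfl | rfl <;> assumption)
  · exact hva (by rcases ha with rfl | rfl <;> exact hn)
  · refine not_triangle_of_induces hsymm hind (x := a) (y := v) (z := v') ?_ (by simp)
      (by simp) ?_ ?_ hvv' ⟨hav, hav', hv⟩ <;> rcases ha with rfl | rfl <;> simp_all [eq_comm]

theorem not_adj_of_adj (hsymm : Symmetric adj) (hw : adj w w') (h : Avoids adj v v' w w')
    {p : V} (hp : p = v ∨ p = v') (hwp : adj w p) : ¬adj w' p := by
  intro hw'p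
  obtain ⟨⟨hvw, hvw', hv'w, hv'w'⟩, hcases⟩ := h
  rcases hcases with ⟨rfl, -, hn⟩ | ⟨rfl, -, hn, -⟩ | ⟨-, -, hn, hn'⟩ | ⟨-, hww', hind⟩
  · exact hn (hsymm (by rcases hp with rfl | rfl <;> exact hwp))
  · exact hn (hsymm (by rcases hp with rfl | rfl <;> exact hwp))
  · rcases hp with rfl | rfl
    · exact hn (hsymm hwp)
    · exact hn' (hsymm hwp)
  · refine not_triangle_of_induces hsymm hind (x := w) (y := w') (z := p) (by simp) (by simp)
      ?_ hww' ?_ ?_ ⟨hw, hwp, hw'p⟩ <;> rcases hp with rfl | rfl <;> simp_all [eq_comm]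

end Avoids

/-- The non-trivial case of `Forces`, with the target pair distinct as `ImpliesRel` requires. -/
def ForcingStep (adj : V → V → Prop) (p q : V × V) : Prop :=
  q.1 ≠ q.2 ∧ adj p.1 q.1 ∧ adj p.2 q.2 ∧ ¬adj p.1 q.2 ∧ ¬adj p.2 q.1

theorem ImpliesRel.of_reflTransGen {p q : V × V} (hp : p.1 ≠ p.2)
    (h : Relation.ReflTransGen (ForcingStep adj) p q) : ImpliesRel adj p q := by
  induction h with
  | refl => exact ⟨0, fun _ => p.1, fun _ => p.2, rfl, rfl, by simp, by simp,
      fun _ _ => hp, by simp⟩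
  | @tail b c _ hbc ih =>
    obtain ⟨k, u, w, h0, hk, hu, hw, hne, hforces⟩ := ih
    obtain ⟨hc, h1, h2, h3, h4⟩ := hbc
    simp only [Prod.ext_iff] at hk
    refine ⟨k + 1, fun i => if i ≤ k then u i else c.1, fun i => if i ≤ k then w i else c.2,
      by simpa using h0, by simp, ?_, ?_, ?_, ?_⟩
    · intro i hi
      rcases Nat.lt_succ_iff_lt_or_eq.1 hi with hi | rfl
      · simpa [hi.le, Nat.succ_le_of_lt hi] using hu i hi
      · simpa [hk.1] using h1
    · intro i hi
      rcases Nat.lt_succ_iff_lt_or_eq.1 hi with hi | rfl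
      · simpa [hi.le, Nat.succ_le_of_lt hi] using hw i hi
      · simpa [hk.2] using h2
    · intro i hi
      by_cases hik : i ≤ k
      · simpa [hik] using hne i hik
      · simpa [hik] using hc
    · intro i hi
      rcases Nat.lt_succ_iff_lt_or_eq.1 hi with hi | rfl
      · simpa [hi.le, Nat.succ_le_of_lt hi] using hforces i hi
      · exact Or.inr (by simpa [hk.1, hk.2] using ⟨h1, h2, h3, h4⟩)

theorem reflTransGen_forcingStep_along_edge (hsymm : Symmetric adj) (hrefl : Reflexive adj)
    {s : V × V} {a b p q : V} (hab : adj a b) (hpq : adj p q) (hbp : b ≠ p) (hbq : b ≠ q)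
    (hap : adj a p → ¬adj a q ∧ ¬adj b p)
    (ihp : ¬adj a q → Relation.ReflTransGen (ForcingStep adj) s (a, p))
    (ihq : ¬adj a p → Relation.ReflTransGen (ForcingStep adj) s (a, q)) (hbq' : ¬adj b q) :
    Relation.ReflTransGen (ForcingStep adj) s (b, p) := by
  have hqb : ¬adj q b := fun h => hbq' (hsymm h)
  by_cases hap' : adj a p
  · -- `b` has no neighbour in `{p, q}`, so a switch inside `{p, q}` is possible at `b`
    obtain ⟨haq, hbp'⟩ := hap hap'
    have hstep : ForcingStep adj (a, p) (b, q) := ⟨hbq, hab, hpq, haq, fun h => hbp' (hsymm h)⟩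
    have hswitch : ForcingStep adj (b, q) (b, p) := ⟨hbp, hrefl b, hsymm hpq, hbp', hqb⟩
    exact ((ihp haq).tail hstep).tail hswitch
  · exact (ihq hap').tail ⟨hbp, hab, hsymm hpq, hap', hqb⟩

theorem reflTransGen_forcingStep_of_edgeAvoidsWalk (hsymm : Symmetric adj)
    (hrefl : Reflexive adj) {v v' x : V} (hedge : adj v v') {t : ℕ}
    {u : ℕ → V} (hwalk : IsWalkOn adj t u) (havoid : EdgeAvoidsWalk adj v v' t u)
    (hx : x = v ∨ x = v') (hux : adj (u 0) x) :
    ∀ i ≤ t, (¬adj (u i) v' → Relation.ReflTransGen (ForcingStep adj) (u 0, x) (u i, v)) ∧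
      (¬adj (u i) v → Relation.ReflTransGen (ForcingStep adj) (u 0, x) (u i, v')) := by
  intro i
  induction i with
  | zero =>
    intro _
    rcases hx with rfl | rfl
    · exact ⟨fun _ => .refl, fun h => absurd hux h⟩
    · exact ⟨fun h => absurd hux h, fun _ => .refl⟩
  | succ i ih =>
    intro hi
    obtain ⟨ihv, ihv'⟩ := ih (by omega)
    have hav := havoid i (by omega)
    obtain ⟨-, hvu, -, hv'u⟩ := hav.1
    have hboth := hav.not_adj_both_s5 hsymm hedge (a := u i) (.inl rfl)
    have hcommon := fun p hp => hav.not_adj_of_adj hsymm (hwalk i (by omega)) (p := p) hp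
    exact ⟨reflTransGen_forcingStep_along_edge hsymm hrefl (hwalk i (by omega)) hedge
        (Ne.symm hvu) (Ne.symm hv'u)
        (fun h => ⟨fun h' => hboth ⟨h, h'⟩, hcommon v (.inl rfl) h⟩) ihv ihv',
      reflTransGen_forcingStep_along_edge hsymm hrefl (hwalk i (by omega)) (hsymm hedge)
        (Ne.symm hv'u) (Ne.symm hvu)
        (fun h => ⟨fun h' => hboth ⟨h', h⟩, hcommon v' (.inr rfl) h⟩) ihv' ihv⟩

theorem align_C4_both_general
    {V : Type*} (adj : V → V → Prop)
    (hsymm : Symmetric adj) (hrefl : Reflexive adj)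
    (v v' : V) (hedge : adj v v')
    (t : ℕ) (ht : 1 ≤ t) (u : ℕ → V)
    (hwalk : IsWalkOn adj t u)
    (havoid : EdgeAvoidsWalk adj v v' t u) :
    ∀ x y : V, (x = v ∨ x = v') → adj (u 0) x →
      (y = v ∨ y = v') → adj (u t) y →
        ImpliesRel adj (u 0, x) (u t, y) := by
  intro x y hx hux hy huy
  have hlast : Avoids adj v v' (u (t - 1)) (u t) := by
    simpa [Nat.sub_add_cancel ht] using havoid (t - 1) (by omega)
  have hboth := hlast.not_adj_both_s5 hsymm hedge (a := u t) (.inr rfl)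
  have hreach := reflTransGen_forcingStep_of_edgeAvoidsWalk hsymm hrefl hedge hwalk
    havoid hx hux t le_rfl
  have hux' : u 0 ≠ x := by
    rcases hx with rfl | rfl
    exacts [Ne.symm (havoid 0 ht).1.1, Ne.symm (havoid 0 ht).1.2.2.1]
  refine ImpliesRel.of_reflTransGen hux' ?_
  rcases hy with rfl | rfl
  exacts [hreach.1 fun h => hboth ⟨huy, h⟩, hreach.2 fun h => hboth ⟨h, huy⟩]

/-- **Lemma (Statement 5).** If the edge `vv'` avoids the walk `u 0, u 1, …, u t` (`t ≥ 1`)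
and both `{u 0, u 1, v, v'}` and `{u (t-1), u t, v, v'}` induce a `C4`, then
`(u 0, x) ~ (u t, y)`, where `x` is the (unique) vertex of `{v,v'}` adjacent to `u 0`
and `y` is the (unique) vertex of `{v,v'}` adjacent to `u t`. -/
theorem align_C4_both
    {V : Type*} [Fintype V] (adj : V → V → Prop)
    (hsymm : Symmetric adj) (hrefl : Reflexive adj)
    (v v' : V) (hedge : adj v v')
    (t : ℕ) (ht : 1 ≤ t) (u : ℕ → V)
    (hwalk : IsWalkOn adj t u)
    (havoid : EdgeAvoidsWalk adj v v' t u)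
    (h1 : InducesC4 adj (u 0) (u 1) v v')
    (h2 : InducesC4 adj (u (t-1)) (u t) v v') :
    ∀ x y : V, (x = v ∨ x = v') → adj (u 0) x →
      (y = v ∨ y = v') → adj (u t) y →
        ImpliesRel adj (u 0, x) (u t, y) :=
  align_C4_both_general adj hsymm hrefl v v' hedge t ht u hwalk havoid
end

section
/- Let G be a reflexive graph. Then G contains a weak edge-asteroid if and only if the complement of the avoidance graph G* of G (taken as a reflexive graph, with a loop at every vertex) contains an asteroid. -/
/-!
Common definitions.  A reflexive graph on a finite vertex type `V` is given by a
symmetric, reflexive adjacency relation `adj : V → V → Prop`; the edge set consists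
of all pairs (including loops `v v`) with `adj u v`.
-/

variable {V : Type*}

/-!
For edges `pq` and `xy` of a reflexive graph, `pq` avoids `xy` exactly when the two edges are
disjoint and no endpoint of either is adjacent to both ends of the other.

Consecutive edges of a walk in `G` share a vertex, so they are non-adjacent in `G*`: the edges of
the walks of a weak edge-asteroid are walks in the complement of `G*`, and the weak edge-asteroid is
an asteroid there. Conversely, let `ab`, `cd` be consecutive vertices of a walk in the complement of
`G*`, both avoided by `pq`. If they share a vertex they are joined in `G` through it. Otherwise they
do not avoid each other, so an endpoint `z` of one is adjacent to both ends `u, v` of the other,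
and `pq` avoids `zu` or `zv`: an endpoint of `pq` adjacent to `z` and `u` cannot be adjacent to `v`
(it does not dominate `uv`) nor can the other endpoint be adjacent to `z` (`z` does not dominate
`pq`). Chaining these connections turns an asteroid of the complement of `G*` into a weak
edge-asteroid.
-/

section Avoidance

variable {V : Type*} {adj : V → V → Prop}

lemma exists_not_adj_of_induced (hsymm : Symmetric adj) {p q x y : V}
    (h : Induces2K2 adj p q x y ∨ InducesP4 adj p q x y ∨ InducesC4 adj p q x y) :
    ∀ z ∈ ({p, q, x, y} : Set V), ∃ w ∈ ({p, q, x, y} : Set V), ¬ adj z w := by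
  obtain ⟨a, b, c, d, hset, hpat⟩ : ∃ a b c d : V, ({a, b, c, d} : Set V) = {p, q, x, y} ∧
      (Is2K2 adj a b c d ∨ IsP4 adj a b c d ∨ IsC4 adj a b c d) := by
    rcases h with ⟨-, a, b, c, d, hset, h⟩ | ⟨-, a, b, c, d, hset, h⟩ | ⟨-, a, b, c, d, hset, h⟩ <;>
      exact ⟨a, b, c, d, hset, by tauto⟩
  have hs : ∀ {u v}, ¬ adj u v → ¬ adj v u := fun h h' => h (hsymm h')
  rw [← hset]
  simp only [Set.mem_insert_iff, Set.mem_singleton_iff, forall_eq_or_imp, forall_eq,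
    exists_eq_or_imp, exists_eq_left]
  rcases hpat with ⟨-, -, h1, h2, h3, h4⟩ | ⟨-, -, -, h1, h2, h3⟩ | ⟨-, -, -, -, h1, h2⟩
  · have := hs h1; have := hs h2; have := hs h3; have := hs h4; tauto
  · have := hs h1; have := hs h2; have := hs h3; tauto
  · have := hs h1; have := hs h2; tauto

lemma induced_of_not_dominated (hsymm : Symmetric adj) {p q x y : V}
    (hnd : [p, q, x, y].Nodup) (hpq : adj p q) (hxy : adj x y)
    (hdom : ¬(adj p x ∧ adj p y) ∧ ¬(adj q x ∧ adj q y) ∧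
      ¬(adj p x ∧ adj q x) ∧ ¬(adj p y ∧ adj q y)) :
    Induces2K2 adj p q x y ∨ InducesP4 adj p q x y ∨ InducesC4 adj p q x y := by
  have hqp : ({q, p, x, y} : Set V) = {p, q, x, y} := Set.insert_comm q p {x, y}
  have hyx : ({p, q, y, x} : Set V) = {p, q, x, y} := by rw [Set.pair_comm y x]
  have hqpyx : ({q, p, y, x} : Set V) = {p, q, x, y} := by rw [Set.pair_comm y x, hqp]
  by_cases A1 : adj p x <;> by_cases A2 : adj p y <;> by_cases A3 : adj q x <;>
    by_cases A4 : adj q y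
  -- the nine patterns with an endpoint adjacent to both ends of the other edge contradict `hdom`
  all_goals try (exfalso; tauto)
  · exact .inr <| .inr ⟨hnd, q, p, x, y, hqp, hsymm hpq, A1, hxy, hsymm A4, A3, A2⟩
  · exact .inr <| .inl ⟨hnd, q, p, x, y, hqp, hsymm hpq, A1, hxy, A3, A4, A2⟩
  · exact .inr <| .inr ⟨hnd, p, q, x, y, rfl, hpq, A3, hxy, hsymm A2, A1, A4⟩
  · exact .inr <| .inl ⟨hnd, q, p, y, x, hqpyx, hsymm hpq, A2, hsymm hxy, A4, A3, A1⟩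
  · exact .inr <| .inl ⟨hnd, p, q, x, y, rfl, hpq, A3, hxy, A1, A2, A4⟩
  · exact .inr <| .inl ⟨hnd, p, q, y, x, hyx, hpq, A4, hsymm hxy, A2, A1, A3⟩
  · exact .inl ⟨hnd, p, q, x, y, rfl, hpq, hxy, A1, A2, A3, A4⟩

lemma avoids_iff_of_adj (hsymm : Symmetric adj) (hrefl : Reflexive adj)
    {p q x y : V} (hpq : adj p q) (hxy : adj x y) :
    Avoids adj p q x y ↔
      (p ≠ x ∧ p ≠ y ∧ q ≠ x ∧ q ≠ y) ∧
      ¬(adj p x ∧ adj p y) ∧ ¬(adj q x ∧ adj q y) ∧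
      ¬(adj p x ∧ adj q x) ∧ ¬(adj p y ∧ adj q y) := by
  refine ⟨fun ⟨hne, hcase⟩ => ⟨hne, ?_⟩, fun ⟨hne, hdom⟩ => ⟨hne, ?_⟩⟩
  · rcases hcase with ⟨rfl, rfl, h⟩ | ⟨rfl, -, h⟩ | ⟨-, rfl, h⟩ | ⟨-, -, hind⟩
    iterate 3 tauto
    · have key := exists_not_adj_of_induced hsymm hind
      simp only [Set.mem_insert_iff, Set.mem_singleton_iff, forall_eq_or_imp, forall_eq,
        exists_eq_or_imp, exists_eq_left] at key
      obtain ⟨kp, kq, kx, ky⟩ := key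
      have := hrefl p; have := hrefl q; have := hrefl x; have := hrefl y
      have := hsymm hpq; have := hsymm hxy
      refine ⟨fun ⟨h1, h2⟩ => ?_, fun ⟨h1, h2⟩ => ?_, fun ⟨h1, h2⟩ => ?_, fun ⟨h1, h2⟩ => ?_⟩
      · rcases kp with h | h | h | h <;> exact h ‹_›
      · rcases kq with h | h | h | h <;> exact h ‹_›
      · have := hsymm h1; have := hsymm h2
        rcases kx with h | h | h | h <;> exact h ‹_›
      · have := hsymm h1; have := hsymm h2
        rcases ky with h | h | h | h <;> exact h ‹_›
  · by_cases hpq' : p = q <;> by_cases hxy' : x = y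
    · subst hpq' hxy'
      exact .inl ⟨rfl, rfl, fun h => hdom.1 ⟨h, h⟩⟩
    · subst hpq'
      exact .inr <| .inl ⟨rfl, hxy', fun h => hdom.2.2.1 ⟨h, h⟩, fun h => hdom.2.2.2 ⟨h, h⟩⟩
    · subst hxy'
      exact .inr <| .inr <| .inl ⟨hpq', rfl, fun h => hdom.1 ⟨h, h⟩, fun h => hdom.2.1 ⟨h, h⟩⟩
    · refine .inr <| .inr <| .inr ⟨hpq', hxy', induced_of_not_dominated hsymm ?_ hpq hxy hdom⟩
      simp only [List.nodup_cons, List.mem_cons, List.not_mem_nil, or_false, List.nodup_nil,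
        and_true, not_or]
      tauto

lemma not_adjStar_of_mem {e f : Sym2 V} {z : V} (he : z ∈ e) (hf : z ∈ f) :
    ¬ AdjStar adj e f := by
  rintro ⟨u, u', v, v', rfl, rfl, ⟨h1, h2, h3, h4⟩, -⟩
  rw [Sym2.mem_iff] at he hf
  rcases he with rfl | rfl <;> rcases hf with rfl | rfl <;> contradiction

variable (hsymm : Symmetric adj) (hrefl : Reflexive adj)
include hsymm hrefl

lemma Avoids.swap_left {p q x y : V} (hpq : adj p q) (hxy : adj x y)
    (h : Avoids adj p q x y) : Avoids adj q p x y := by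
  rw [avoids_iff_of_adj hsymm hrefl hpq hxy] at h
  rw [avoids_iff_of_adj hsymm hrefl (hsymm hpq) hxy]
  tauto

lemma Avoids.swap_right {p q x y : V} (hpq : adj p q) (hxy : adj x y)
    (h : Avoids adj p q x y) : Avoids adj p q y x := by
  rw [avoids_iff_of_adj hsymm hrefl hpq hxy] at h
  rw [avoids_iff_of_adj hsymm hrefl hpq (hsymm hxy)]
  tauto

lemma adjStar_mk_iff {p q x y : V} (hpq : adj p q) (hxy : adj x y) :
    AdjStar adj s(p, q) s(x, y) ↔ Avoids adj p q x y := by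
  refine ⟨fun ⟨u, u', v, v', he, hf, h⟩ => ?_, fun h => ⟨p, q, x, y, rfl, rfl, h⟩⟩
  rcases Sym2.eq_iff.mp he with ⟨rfl, rfl⟩ | ⟨rfl, rfl⟩ <;>
    rcases Sym2.eq_iff.mp hf with ⟨rfl, rfl⟩ | ⟨rfl, rfl⟩
  · exact h
  · exact (h.swap_right hsymm hrefl hpq (hsymm hxy))
  · exact (h.swap_left hsymm hrefl (hsymm hpq) hxy)
  · exact (h.swap_right hsymm hrefl (hsymm hpq) (hsymm hxy)).swap_left hsymm hrefl (hsymm hpq) hxy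

lemma Avoids.or_of_adj_adj {p q z z' u v : V} (hpq : adj p q) (hzz' : adj z z') (huv : adj u v)
    (hz : Avoids adj p q z z') (huv' : Avoids adj p q u v) (hzu : adj z u) (hzv : adj z v) :
    Avoids adj p q z u ∨ Avoids adj p q z v := by
  rw [avoids_iff_of_adj hsymm hrefl hpq hzz'] at hz
  rw [avoids_iff_of_adj hsymm hrefl hpq huv] at huv'
  rw [avoids_iff_of_adj hsymm hrefl hpq hzu, avoids_iff_of_adj hsymm hrefl hpq hzv]
  obtain ⟨⟨hpz, -, hqz, -⟩, -, -, hzpq, -⟩ := hz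
  obtain ⟨⟨hpu, hpv, hqu, hqv⟩, hpuv, hquv, hupq, hvpq⟩ := huv'
  by_cases hl : (adj p z ∧ adj p u) ∨ (adj q z ∧ adj q u)
  · refine .inr ⟨⟨hpz, hpv, hqz, hqv⟩, fun ⟨h1, h2⟩ => ?_, fun ⟨h1, h2⟩ => ?_, hzpq, hvpq⟩
    · rcases hl with ⟨-, h⟩ | ⟨h, -⟩
      exacts [hpuv ⟨h, h2⟩, hzpq ⟨h1, h⟩]
    · rcases hl with ⟨h, -⟩ | ⟨-, h⟩
      exacts [hzpq ⟨h, h1⟩, hquv ⟨h, h2⟩]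
  · exact .inl ⟨⟨hpz, hpu, hqz, hqu⟩, fun h => hl (.inl h), fun h => hl (.inr h), hzpq, hupq⟩

end Avoidance

section AvoidedWalks

open Relation

lemma reflTransGen_of_forall_lt {α : Type*} {r : α → α → Prop} {f : ℕ → α} {t : ℕ}
    (h : ∀ j < t, ReflTransGen r (f j) (f (j + 1))) : ReflTransGen r (f 0) (f t) := by
  induction t with
  | zero => rfl
  | succ t ih => exact (ih fun j hj => h j (by omega)).trans (h t (by omega))

variable {V : Type*} {adj : V → V → Prop} {p q : V}

/-- `ReflTransGen (AvoidedStep adj p q) (a, b) (c, d)` says that some walk starts with the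
edge `ab`, ends with the edge `cd`, and all its edges after the first are avoided by `pq`. -/
def AvoidedStep (adj : V → V → Prop) (p q : V) (e f : V × V) : Prop :=
  e.2 = f.1 ∧ adj f.1 f.2 ∧ Avoids adj p q f.1 f.2

lemma exists_walk_of_reflTransGen {a b : V} {e : V × V} (hab : adj a b)
    (hav : Avoids adj p q a b) (h : ReflTransGen (AvoidedStep adj p q) (a, b) e) :
    ∃ (t : ℕ) (w : ℕ → V), 1 ≤ t ∧ IsWalkOn adj t w ∧ w 0 = a ∧ w 1 = b ∧
      w (t - 1) = e.1 ∧ w t = e.2 ∧ EdgeAvoidsWalk adj p q t w := by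
  induction h with
  | refl =>
    refine ⟨1, fun i => if i = 0 then a else b, le_rfl, ?_, rfl, rfl, rfl, rfl, ?_⟩ <;>
      intro i hi <;> obtain rfl : i = 0 := by omega
    exacts [hab, hav]
  | @tail f g _ hstep ih =>
    obtain ⟨hlink, hadj, havoid⟩ := hstep
    obtain ⟨t, w, ht, hwalk, h0, h1, -, hlast, hwav⟩ := ih
    refine ⟨t + 1, fun i => if i ≤ t then w i else g.2, by omega, ?_, by simp [h0],
      by simp [ht, h1], by simp [hlast, hlink], by simp, ?_⟩ <;> intro i hi
    · rcases Nat.lt_add_one_iff_lt_or_eq.mp hi with hi | rfl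
      · simpa [hi.le, Nat.succ_le_of_lt hi] using hwalk i hi
      · simpa [hlast, hlink] using hadj
    · rcases Nat.lt_add_one_iff_lt_or_eq.mp hi with hi | rfl
      · simpa [hi.le, Nat.succ_le_of_lt hi] using hwav i hi
      · simpa [hlast, hlink] using havoid

variable (hsymm : Symmetric adj) (hrefl : Reflexive adj) (hpq : adj p q)
include hsymm hrefl hpq

lemma reflTransGen_of_mem {a b c d : V} (hcd : adj c d) (hav : Avoids adj p q c d)
    (hb : b ∈ s(c, d)) : ReflTransGen (AvoidedStep adj p q) (a, b) (c, d) := by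
  rcases Sym2.mem_iff.mp hb with rfl | rfl
  · exact .single ⟨rfl, hcd, hav⟩
  · have hbc : AvoidedStep adj p q (a, b) (b, c) :=
      ⟨rfl, hsymm hcd, hav.swap_right hsymm hrefl hpq hcd⟩
    exact .tail (.single hbc) ⟨rfl, hcd, hav⟩

lemma reflTransGen_of_mem_of_mem {a b c d z : V} (hab : adj a b) (hav : Avoids adj p q a b)
    (hcd : adj c d) (hav' : Avoids adj p q c d) (hz : z ∈ s(a, b)) (hz' : z ∈ s(c, d)) :
    ReflTransGen (AvoidedStep adj p q) (a, b) (c, d) := by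
  rcases Sym2.mem_iff.mp hz with rfl | rfl
  · exact .head ⟨rfl, hsymm hab, hav.swap_right hsymm hrefl hpq hab⟩
      (reflTransGen_of_mem hsymm hrefl hpq hcd hav' hz')
  · exact reflTransGen_of_mem hsymm hrefl hpq hcd hav' hz'

lemma reflTransGen_of_eq_or_not_adjStar {a b c d : V} (hab : adj a b)
    (hav : Avoids adj p q a b) (hcd : adj c d) (hav' : Avoids adj p q c d)
    (h : s(a, b) = s(c, d) ∨ ¬ AdjStar adj s(a, b) s(c, d)) :
    ReflTransGen (AvoidedStep adj p q) (a, b) (c, d) := by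
  have bridge : ∀ {u v : V}, u ∈ s(a, b) → v ∈ s(c, d) → adj u v → Avoids adj p q u v →
      ReflTransGen (AvoidedStep adj p q) (a, b) (c, d) := fun hu hv huv h =>
    (reflTransGen_of_mem_of_mem hsymm hrefl hpq hab hav huv h hu (Sym2.mem_mk_left _ _)).trans
      (reflTransGen_of_mem_of_mem hsymm hrefl hpq huv h hcd hav' (Sym2.mem_mk_right _ _) hv)
  by_cases hshare : ∃ z, z ∈ s(a, b) ∧ z ∈ s(c, d)
  · obtain ⟨z, hz, hz'⟩ := hshare
    exact reflTransGen_of_mem_of_mem hsymm hrefl hpq hab hav hcd hav' hz hz'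
  have hdisj : a ≠ c ∧ a ≠ d ∧ b ≠ c ∧ b ≠ d := by
    refine ⟨fun h => hshare ⟨a, by simp, by simp [h]⟩, fun h => hshare ⟨a, by simp, by simp [h]⟩,
      fun h => hshare ⟨b, by simp, by simp [h]⟩, fun h => hshare ⟨b, by simp, by simp [h]⟩⟩
  have hne := h.resolve_left fun heq => hshare ⟨a, by simp, heq ▸ by simp⟩
  rw [adjStar_mk_iff hsymm hrefl hab hcd, avoids_iff_of_adj hsymm hrefl hab hcd] at hne
  have hdom : (adj a c ∧ adj a d) ∨ (adj b c ∧ adj b d) ∨ (adj a c ∧ adj b c) ∨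
      (adj a d ∧ adj b d) := by
    tauto
  have ha := Sym2.mem_mk_left a b
  have hb := Sym2.mem_mk_right a b
  have hc := Sym2.mem_mk_left c d
  have hd := Sym2.mem_mk_right c d
  have hba := hav.swap_right hsymm hrefl hpq hab
  have hdc := hav'.swap_right hsymm hrefl hpq hcd
  rcases hdom with ⟨hac, had⟩ | ⟨hbc, hbd⟩ | ⟨hac, hbc⟩ | ⟨had, hbd⟩
  · rcases hav.or_of_adj_adj hsymm hrefl hpq hab hcd hav' hac had with h | h
    exacts [bridge ha hc hac h, bridge ha hd had h]
  · rcases hba.or_of_adj_adj hsymm hrefl hpq (hsymm hab) hcd hav' hbc hbd with h | h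
    exacts [bridge hb hc hbc h, bridge hb hd hbd h]
  · rcases hav'.or_of_adj_adj hsymm hrefl hpq hcd hab hav (hsymm hac) (hsymm hbc) with h | h
    exacts [bridge ha hc hac (h.swap_right hsymm hrefl hpq (hsymm hac)),
      bridge hb hc hbc (h.swap_right hsymm hrefl hpq (hsymm hbc))]
  · rcases hdc.or_of_adj_adj hsymm hrefl hpq (hsymm hcd) hab hav (hsymm had) (hsymm hbd) with h | h
    exacts [bridge ha hd had (h.swap_right hsymm hrefl hpq (hsymm had)),
      bridge hb hd hbd (h.swap_right hsymm hrefl hpq (hsymm hbd))]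

end AvoidedWalks

section Asteroids

open Relation

variable {V : Type*} {adj : V → V → Prop}

/-- Clamped at the last edge for `j ≥ t`, so that every value is an edge of `G`. -/
def walkEdge {t : ℕ} {w : ℕ → V} (hw : IsWalkOn adj t w) (ht : 1 ≤ t) (j : ℕ) : GEdgeSet adj :=
  ⟨s(w (min j (t - 1)), w (min j (t - 1) + 1)), _, _, rfl, hw _ (by omega)⟩

lemma walkEdge_val {t : ℕ} {w : ℕ → V} (hw : IsWalkOn adj t w) (ht : 1 ≤ t) {j : ℕ}
    (hj : j < t) : (walkEdge hw ht j).1 = s(w j, w (j + 1)) := by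
  show s(w (min j (t - 1)), w (min j (t - 1) + 1)) = _
  rw [min_eq_left (by omega)]

lemma asteroid_of_weakEdgeAsteroid {k : ℕ} {x y : ZMod (2 * k + 1) → V}
    (h : WeakEdgeAsteroid adj k x y) :
    Asteroid (fun e f : GEdgeSet adj => e = f ∨ ¬ AdjStar adj e.1 f.1) k
      (fun i => ⟨s(x i, y i), x i, y i, rfl, h.1 i⟩) := by
  intro i
  obtain ⟨t, w, ht, hw, hstart, hend, havoid⟩ := h.2 i
  refine ⟨t - 1, walkEdge hw ht, Subtype.ext ?_, Subtype.ext ?_, fun j hj => .inr ?_,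
    fun j hj => ?_⟩
  · rw [walkEdge_val hw ht ht]
    exact Sym2.eq_iff.mpr hstart
  · rw [walkEdge_val hw ht (by omega), Nat.sub_add_cancel ht]
    exact Sym2.eq_iff.mpr hend
  · rw [walkEdge_val hw ht (by omega), walkEdge_val hw ht (by omega)]
    exact not_adjStar_of_mem (Sym2.mem_mk_right _ _) (Sym2.mem_mk_left _ _)
  · have hstar : AdjStar adj s(x i, y i) (walkEdge hw ht j).1 :=
      ⟨_, _, _, _, rfl, walkEdge_val hw ht (by omega), havoid j (by omega)⟩
    rintro (heq | hnot)
    · exact not_adjStar_of_mem (Sym2.mem_mk_left _ _) (heq ▸ Sym2.mem_mk_left _ _) hstar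
    · exact hnot hstar

lemma exists_weakEdgeAsteroid_of_asteroid (hsymm : Symmetric adj) (hrefl : Reflexive adj)
    {k : ℕ} {e : ZMod (2 * k + 1) → GEdgeSet adj}
    (h : Asteroid (fun e f : GEdgeSet adj => e = f ∨ ¬ AdjStar adj e.1 f.1) k e) :
    ∃ x y : ZMod (2 * k + 1) → V, WeakEdgeAsteroid adj k x y := by
  choose x y hxy hadj using fun i => (e i).2
  refine ⟨x, y, hadj, fun i => ?_⟩
  obtain ⟨t, W, hW0, hWt, hWwalk, hWavoid⟩ := h i
  choose a b hab hadjab using fun j => (W j).2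
  have havoid : ∀ j ≤ t, Avoids adj (x i) (y i) (a j) (b j) := fun j hj => by
    have hstar := not_not.mp (not_or.mp (hWavoid j hj)).2
    rwa [hxy, hab, adjStar_mk_iff hsymm hrefl (hadj i) (hadjab j)] at hstar
  have hchain : ReflTransGen (AvoidedStep adj (x i) (y i)) (a 0, b 0) (a t, b t) :=
    reflTransGen_of_forall_lt (f := fun j => (a j, b j)) fun j hj =>
      reflTransGen_of_eq_or_not_adjStar hsymm hrefl (hadj i) (hadjab j) (havoid j hj.le)
        (hadjab (j + 1)) (havoid (j + 1) hj)
        (by simpa only [hab, Subtype.ext_iff] using hWwalk j hj)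
  obtain ⟨T, w, hT, hw, h0, h1, hT1, hTT, hwav⟩ :=
    exists_walk_of_reflTransGen (hadjab 0) (havoid 0 (Nat.zero_le t)) hchain
  refine ⟨T, w, hT, hw, ?_, ?_, hwav⟩
  · rw [h0, h1, ← Sym2.eq_iff, ← hab, ← hxy, hW0]
  · rw [hT1, hTT, ← Sym2.eq_iff, ← hab, ← hxy, hWt]

end Asteroids

theorem weakEdgeAsteroid_iff_asteroid_in_complement_avoidanceGraph_general
    {V : Type*} (adj : V → V → Prop)
    (hsymm : Symmetric adj) (hrefl : Reflexive adj) :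
    (∃ (k : ℕ) (x y : ZMod (2*k+1) → V), WeakEdgeAsteroid adj k x y) ↔
      ∃ (k : ℕ) (e : ZMod (2*k+1) → GEdgeSet adj),
        Asteroid (fun e f : GEdgeSet adj => e = f ∨ ¬ AdjStar adj e.1 f.1) k e :=
  ⟨fun ⟨k, _, _, h⟩ => ⟨k, _, asteroid_of_weakEdgeAsteroid h⟩,
    fun ⟨k, _, h⟩ => ⟨k, exists_weakEdgeAsteroid_of_asteroid hsymm hrefl h⟩⟩

/-- **Theorem (Statement 7).** A reflexive graph `G` contains a weak edge-asteroid if and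
only if the complement of its avoidance graph `G*` (with a loop at every vertex) contains
an asteroid. -/
theorem weakEdgeAsteroid_iff_asteroid_in_complement_avoidanceGraph
    {V : Type*} [Fintype V] (adj : V → V → Prop)
    (hsymm : Symmetric adj) (hrefl : Reflexive adj) :
    (∃ (k : ℕ) (x y : ZMod (2*k+1) → V), WeakEdgeAsteroid adj k x y) ↔
      ∃ (k : ℕ) (e : ZMod (2*k+1) → GEdgeSet adj),
        Asteroid (fun e f : GEdgeSet adj => e = f ∨ ¬ AdjStar adj e.1 f.1) k e :=
  weakEdgeAsteroid_iff_asteroid_in_complement_avoidanceGraph_general adj hsymm hrefl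
end

section
/- The reflexive graph K_{3,3} (the complete bipartite graph with two parts of size 3, with a loop added at every vertex) is not a strong cocomparability graph. -/
/-!
Common definitions.  A reflexive graph on a finite vertex type `V` is given by a
symmetric, reflexive adjacency relation `adj : V → V → Prop`; the edge set consists
of all pairs (including loops `v v`) with `adj u v`.
-/

variable {V : Type*}

/-!
The vertices `(0, i)` and `(1, i)` of `K_{3,3}` form three pairs such that any two of them,
listed in the same orientation, span a `Slash`. A linear order orients each pair one of two
ways, so two of the three pairs are oriented alike.
-/

variable {ι : Type*}

def CrossedPairs (adj : V → V → Prop) (p q : ι → V) : Prop :=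
  ∀ i j, i ≠ j →
    ¬ adj (p i) (p j) ∧ adj (p i) (q j) ∧ adj (q i) (p j) ∧ ¬ adj (q i) (q j)

namespace CrossedPairs

variable {adj : V → V → Prop} {p q : ι → V}

theorem fst_ne_snd (hc : CrossedPairs adj p q) {i j : ι} (hij : i ≠ j) : p i ≠ q i := by
  intro h
  obtain ⟨-, hpq, -, hqq⟩ := hc i j hij
  exact hqq (h ▸ hpq)

theorem not_orientation_iff (hc : CrossedPairs adj p q) {lt : V → V → Prop}
    [IsStrictTotalOrder V lt]
    (hfree : ∀ u v x y : V, lt u v → lt x y → ¬(¬ adj u x ∧ adj u y ∧ adj v x ∧ ¬ adj v y))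
    {i j : ι} (hij : i ≠ j) : ¬ (lt (p i) (q i) ↔ lt (p j) (q j)) := by
  intro hiff
  obtain ⟨hpp, hpq, hqp, hqq⟩ := hc i j hij
  rcases trichotomous_of lt (p i) (q i) with hi | hi | hi
  · exact hfree _ _ _ _ hi (hiff.1 hi) ⟨hpp, hpq, hqp, hqq⟩
  · exact hc.fst_ne_snd hij hi
  · have hj : lt (q j) (p j) :=
      (trichotomous_of lt (p j) (q j)).resolve_left (hiff.not.1 (asymm hi)) |>.resolve_left
        (hc.fst_ne_snd hij.symm)
    exact hfree _ _ _ _ hi hj ⟨hqq, hqp, hpq, hpp⟩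

end CrossedPairs

theorem not_isStrongCocomp_of_crossedPairs [Fintype ι] (hι : 2 < Fintype.card ι)
    {adj : V → V → Prop} {p q : ι → V} (hc : CrossedPairs adj p q) : ¬ IsStrongCocomp adj := by
  rintro ⟨lt, hlt, hfree⟩
  obtain ⟨i, j, hij, hsame⟩ :=
    Fintype.exists_ne_map_eq_of_card_lt (fun i => lt (p i) (q i)) (by simpa using hι)
  exact hc.not_orientation_iff hfree hij (Iff.of_eq hsame)

/-- The reflexive graph `K_{3,3}` (complete bipartite with parts of
size 3, loops at all vertices) is not a strong cocomparability graph. -/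
theorem k33_not_strongCocomp :
    ¬ IsStrongCocomp (fun u v : Fin 2 × Fin 3 => u = v ∨ u.1 ≠ v.1) := by
  refine not_isStrongCocomp_of_crossedPairs (ι := Fin 3) (by simp)
    (p := fun i => (0, i)) (q := fun i => (1, i)) ?_
  intro i j hij
  simp [hij]
end

section
/- A reflexive graph is a cocomparability graph if and only if it does not contain an asteroid. -/
/-!
Common definitions.  A reflexive graph on a finite vertex type `V` is given by a
symmetric, reflexive adjacency relation `adj : V → V → Prop`; the edge set consists
of all pairs (including loops `v v`) with `adj u v`.
-/

variable {V : Type*}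

/-!
If `<` is a cocomparability ordering, a walk avoiding the closed neighbourhood of `x i` cannot
cross `x i`, so `x (i + k)` and `x (i + k + 1)` lie on the same side of `x i`. With `d = k + 1`,
so that `i + k = i - d` and `i + k + 1 = i + d`, the truth value of `x i < x (i + d)` would have
to alternate along the odd cycle `i, i + d, i + 2d, …`, which is impossible.

Conversely, let `H` be the complement of `G`. By Gallai's theory of implication classes, `H` has
a transitive orientation, which linear extension turns into a cocomparability ordering of `G`, as
soon as no edge `(u, v)` of `H` forces its reverse `(v, u)`. This is proved by induction on `H`:
delete the implication class `A` of an edge `(s, t)` together with its reverse, orient the rest by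
induction and add `A`. A forcing chain of the smaller graph is a forcing chain of `H` interrupted
by jumps `(x, s) ↔ (x, t)` across triangles `x s t`; by the triangle lemma two consecutive jumps
cancel and a single jump cannot reverse an edge, so no edge of the smaller graph forces its
reverse either. Finally, a forcing chain from `(u, v)` to `(v, u)` lists an odd cycle `z` of
non-edges of `G` in which `z j` and `z (j + 2)` are adjacent, and `i ↦ z (2 * i)` is then an
asteroid whose walks are single edges.
-/

open Relation

lemma ZMod.val_add_natCast {m : ℕ} [NeZero m] (j : ZMod m) (c : ℕ) :
    (j + c).val = (j.val + c) % m := by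
  rw [ZMod.val_add, ZMod.val_natCast, Nat.add_mod_mod]

lemma ZMod.not_forall_add_iff_not (k : ℕ) (d : ZMod (2 * k + 1)) (P : ZMod (2 * k + 1) → Prop) :
    ¬ ∀ i, P (i + d) ↔ ¬ P i := by
  intro h
  have key : ∀ m : ℕ, P (m * d) ↔ (Even m ↔ P 0) := by
    intro m
    induction m with
    | zero => simp
    | succ m ih => rw [Nat.cast_succ, add_one_mul, h, ih, Nat.even_add_one]; tauto
  have := key (2 * k + 1)
  rw [ZMod.natCast_self, zero_mul] at this
  simp at this

namespace SimpleGraph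

variable {V : Type*} (H : SimpleGraph V)

/-- Golumbic's forcing relation `Γ`; the classes of its reflexive transitive closure `GammaStar`
on the edges are the implication classes of `H`. -/
def Gamma (p q : V × V) : Prop :=
  H.Adj p.1 p.2 ∧ H.Adj q.1 q.2 ∧
    (p.1 = q.1 ∧ ¬ H.Adj p.2 q.2 ∨ p.2 = q.2 ∧ ¬ H.Adj p.1 q.1)

def GammaStar : V × V → V × V → Prop := ReflTransGen H.Gamma

def NoInvertibleEdge : Prop := ∀ u v, H.Adj u v → ¬ H.GammaStar (u, v) (v, u)

structure IsTransitiveOrientation (F : V → V → Prop) : Prop where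
  adj_iff : ∀ u v, H.Adj u v ↔ F u v ∨ F v u
  asymm : ∀ u v, F u v → ¬ F v u
  trans : ∀ u v w, F u v → F v w → F u w

/-- Golumbic's `H - Â`, where `A` is the implication class of `(s, t)`. -/
def deleteImplicationClass (s t : V) : SimpleGraph V where
  Adj u v := H.Adj u v ∧ ¬ H.GammaStar (s, t) (u, v) ∧ ¬ H.GammaStar (s, t) (v, u)
  symm := ⟨fun _ _ h => ⟨h.1.symm, h.2.2, h.2.1⟩⟩
  loopless := ⟨fun _ h => H.irrefl h.1⟩

def IsApex (s t x : V) : Prop :=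
  H.Adj x s ∧ H.Adj x t ∧ ¬ H.GammaStar (s, t) (s, x) ∧ ¬ H.GammaStar (s, t) (x, t) ∧
    ¬ H.GammaStar (x, s) (x, t)

/-- Up to forcing chains of `H`, these are the forcing steps of `H.deleteImplicationClass s t`
that are not forcing chains of `H` (`exists_isApex`). -/
def Jump (s t : V) (a b : V × V) : Prop :=
  ∃ x, H.IsApex s t x ∧
    (a = (x, s) ∧ b = (x, t) ∨ a = (x, t) ∧ b = (x, s) ∨
      a = (s, x) ∧ b = (t, x) ∨ a = (t, x) ∧ b = (s, x))

/-- A walk `W 0, …, W (m + 1)` of `H` with no edge `W i W (i + 2)`. -/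
def IsForcingChain (m : ℕ) (W : ℕ → V) : Prop :=
  (∀ i ≤ m, H.Adj (W i) (W (i + 1))) ∧ ∀ i < m, ¬ H.Adj (W i) (W (i + 2))

variable {H} {p q r : V × V} {s t x : V} {a b a' b' : V × V}

lemma Gamma.symm (h : H.Gamma p q) : H.Gamma q p := by
  obtain ⟨hp, hq, ⟨h1, h2⟩ | ⟨h1, h2⟩⟩ := h
  · exact ⟨hq, hp, Or.inl ⟨h1.symm, fun h => h2 h.symm⟩⟩
  · exact ⟨hq, hp, Or.inr ⟨h1.symm, fun h => h2 h.symm⟩⟩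

lemma Gamma.swap (h : H.Gamma p q) : H.Gamma p.swap q.swap := by
  obtain ⟨hp, hq, h | h⟩ := h
  exacts [⟨hp.symm, hq.symm, Or.inr h⟩, ⟨hp.symm, hq.symm, Or.inl h⟩]

lemma Gamma.zigzag {u v u' v' : V} (h : H.Gamma (u, v) (u', v')) :
    H.Adj v u' ∧ ¬ H.Adj u u' ∧ H.Adj u' v' ∧ ¬ H.Adj v v' := by
  obtain ⟨huv, huv', ⟨rfl, hvv'⟩ | ⟨rfl, huu'⟩⟩ := h
  exacts [⟨huv.symm, H.irrefl, huv', hvv'⟩, ⟨huv'.symm, huu', huv', H.irrefl⟩]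

lemma GammaStar.trans (h : H.GammaStar p q) (h' : H.GammaStar q r) : H.GammaStar p r :=
  ReflTransGen.trans h h'

lemma GammaStar.symm (h : H.GammaStar p q) : H.GammaStar q p := by
  have : Std.Symm H.Gamma := ⟨fun _ _ => Gamma.symm⟩
  exact Std.Symm.symm (r := ReflTransGen H.Gamma) _ _ h

lemma GammaStar.swap (h : H.GammaStar p q) : H.GammaStar p.swap q.swap := by
  induction h with
  | refl => exact ReflTransGen.refl
  | tail _ hstep ih => exact ih.tail hstep.swap

lemma GammaStar.adj (h : H.GammaStar p q) (hp : H.Adj p.1 p.2) : H.Adj q.1 q.2 := by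
  induction h with
  | refl => exact hp
  | tail _ hstep _ => exact hstep.2.1

/-- Golumbic's triangle lemma. -/
theorem GammaStar.triangle {p₀ q₀ : V} (hxp : H.Adj x p₀) (hxq : H.Adj x q₀)
    (hp : ¬ H.GammaStar (p₀, q₀) (p₀, x)) (hq : ¬ H.GammaStar (p₀, q₀) (x, q₀))
    (h : H.GammaStar (p₀, q₀) r) :
    H.Adj x r.1 ∧ H.Adj x r.2 ∧ H.GammaStar (x, p₀) (x, r.1) ∧
      H.GammaStar (x, q₀) (x, r.2) := by
  induction h with
  | refl => exact ⟨hxp, hxq, ReflTransGen.refl, ReflTransGen.refl⟩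
  | @tail b c hb hbc ih =>
    obtain ⟨a, y⟩ := b
    obtain ⟨a', y'⟩ := c
    obtain ⟨hxa, hxy, hpa, hqy⟩ := ih
    have hc' := hb.tail hbc
    obtain ⟨-, hc, ⟨rfl, hyy⟩ | ⟨rfl, haa⟩⟩ := hbc
    · have hxy' : H.Adj x y' := by
        by_contra hxy'
        have hstep : H.Gamma (a, y') (a, x) :=
          ⟨hc, hxa.symm, Or.inl ⟨rfl, fun h => hxy' h.symm⟩⟩
        exact hp ((hc'.tail hstep).trans hpa.swap.symm)
      exact ⟨hxa, hxy', hpa, hqy.tail ⟨hxy, hxy', Or.inl ⟨rfl, hyy⟩⟩⟩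
    · have hxa' : H.Adj x a' := by
        by_contra hxa'
        have hstep : H.Gamma (a', y) (x, y) := ⟨hc, hxy, Or.inr ⟨rfl, fun h => hxa' h.symm⟩⟩
        exact hq ((hc'.tail hstep).trans hqy.symm)
      exact ⟨hxa', hxy, hpa.tail ⟨hxa, hxa', Or.inl ⟨rfl, haa⟩⟩, hqy⟩

lemma deleteImplicationClass_comm :
    H.deleteImplicationClass t s = H.deleteImplicationClass s t := by
  ext u v
  exact ⟨fun ⟨h, h1, h2⟩ => ⟨h, fun h' => h2 h'.swap, fun h' => h1 h'.swap⟩,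
    fun ⟨h, h1, h2⟩ => ⟨h, fun h' => h2 h'.swap, fun h' => h1 h'.swap⟩⟩

lemma deleteImplicationClass_lt (hst : H.Adj s t) : H.deleteImplicationClass s t < H :=
  lt_of_le_of_ne (fun _ _ h => h.1) fun h => by
    have : (H.deleteImplicationClass s t).Adj s t := by rw [h]; exact hst
    exact this.2.1 ReflTransGen.refl

lemma IsApex.comm (hx : H.IsApex s t x) : H.IsApex t s x :=
  ⟨hx.2.1, hx.1, fun h => hx.2.2.2.1 h.swap, fun h => hx.2.2.1 h.swap,
    fun h => hx.2.2.2.2 h.symm⟩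

lemma Jump.comm (h : H.Jump s t a b) : H.Jump t s a b := by
  obtain ⟨x, hx, h⟩ := h
  exact ⟨x, hx.comm, by tauto⟩

lemma Jump.swap (h : H.Jump s t a b) : H.Jump s t a.swap b.swap := by
  obtain ⟨x, hx, ⟨rfl, rfl⟩ | ⟨rfl, rfl⟩ | ⟨rfl, rfl⟩ | ⟨rfl, rfl⟩⟩ := h <;>
    exact ⟨x, hx, by simp⟩

lemma IsApex.gammaStar_fan (hst : H.Adj s t) (hx : H.IsApex s t x)
    (h : H.GammaStar (x, t) r) :
    H.Adj s r.1 ∧ H.Adj s r.2 ∧ H.GammaStar (s, x) (s, r.1) ∧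
      H.GammaStar (s, t) (s, r.2) :=
  GammaStar.triangle hx.1.symm hst (fun h' => hx.2.2.2.2 h'.symm)
    (fun h' => hx.2.2.2.1 h'.symm) h

lemma IsApex.gammaStar_of_gammaStar_jump (hst : H.Adj s t) (hx : H.IsApex s t x)
    (h : H.GammaStar (x, t) a') (hj : H.Jump s t a' b') : H.GammaStar (x, s) b' := by
  obtain ⟨y, -, ⟨rfl, rfl⟩ | ⟨rfl, rfl⟩ | ⟨rfl, rfl⟩ | ⟨rfl, rfl⟩⟩ := hj
  · exact absurd (hx.gammaStar_fan hst h).2.1 H.irrefl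
  · exact (hx.gammaStar_fan hst h).2.2.1.swap
  · exact absurd (hx.gammaStar_fan hst h).1 H.irrefl
  · exact absurd (hx.gammaStar_fan hst h).2.2.1.symm hx.2.2.1

lemma Jump.gammaStar_of_gammaStar_jump (hst : H.Adj s t) (hj : H.Jump s t a b)
    (h : H.GammaStar b a') (hj' : H.Jump s t a' b') : H.GammaStar a b' := by
  obtain ⟨x, hx, ⟨rfl, rfl⟩ | ⟨rfl, rfl⟩ | ⟨rfl, rfl⟩ | ⟨rfl, rfl⟩⟩ := hj
  · exact hx.gammaStar_of_gammaStar_jump hst h hj'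
  · exact hx.comm.gammaStar_of_gammaStar_jump hst.symm h hj'.comm
  · exact (hx.gammaStar_of_gammaStar_jump hst h.swap hj'.swap).swap
  · exact (hx.comm.gammaStar_of_gammaStar_jump hst.symm h.swap hj'.comm.swap).swap

lemma IsApex.not_gammaStar_inversion (hst : H.Adj s t) (hx : H.IsApex s t x) {u v : V}
    (h₁ : H.GammaStar (u, v) (x, s)) (h₂ : H.GammaStar (x, t) (v, u)) : False :=
  H.irrefl (GammaStar.triangle hx.2.1.symm hst.symm hx.2.2.2.2
    (fun h => hx.2.2.1 h.swap.symm) (h₁.symm.trans h₂.swap.symm)).1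

lemma Jump.not_gammaStar_inversion (hst : H.Adj s t) (hj : H.Jump s t a b) {u v : V}
    (h₁ : H.GammaStar (u, v) a) (h₂ : H.GammaStar b (v, u)) : False := by
  obtain ⟨x, hx, ⟨rfl, rfl⟩ | ⟨rfl, rfl⟩ | ⟨rfl, rfl⟩ | ⟨rfl, rfl⟩⟩ := hj
  · exact hx.not_gammaStar_inversion hst h₁ h₂
  · exact hx.comm.not_gammaStar_inversion hst.symm h₁ h₂
  · exact hx.not_gammaStar_inversion hst h₁.swap h₂.swap
  · exact hx.comm.not_gammaStar_inversion hst.symm h₁.swap h₂.swap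

lemma exists_isApex {y y' : V} (hy : (H.deleteImplicationClass s t).Adj x y)
    (hy' : (H.deleteImplicationClass s t).Adj x y') (hyy' : H.GammaStar (s, t) (y, y'))
    (hxy : ¬ H.GammaStar (x, y) (x, y')) :
    H.IsApex s t x ∧ H.GammaStar (x, y) (x, s) ∧ H.GammaStar (x, t) (x, y') := by
  obtain ⟨hxs, hxt, hys, hy't⟩ :=
    GammaStar.triangle hy.1 hy'.1 (fun h => hy.2.2 (hyy'.trans h))
      (fun h => hy'.2.1 (hyy'.trans h)) hyy'.symm
  refine ⟨⟨hxs, hxt, fun h => hy.2.2 (h.trans hys.swap.symm),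
    fun h => hy'.2.1 (h.trans hy't.symm), fun h => hxy ((hys.trans h).trans hy't.symm)⟩,
    hys, hy't.symm⟩

lemma gamma_deleteImplicationClass_of_fst_eq {y y' : V}
    (hy : (H.deleteImplicationClass s t).Adj x y) (hy' : (H.deleteImplicationClass s t).Adj x y')
    (hyy' : ¬ (H.deleteImplicationClass s t).Adj y y') :
    H.GammaStar (x, y) (x, y') ∨
      ∃ a b, H.GammaStar (x, y) a ∧ H.Jump s t a b ∧ H.GammaStar b (x, y') := by
  by_cases hH : H.Adj y y'
  swap
  · exact Or.inl (ReflTransGen.single ⟨hy.1, hy'.1, Or.inl ⟨rfl, hH⟩⟩)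
  by_cases hxy : H.GammaStar (x, y) (x, y')
  · exact Or.inl hxy
  right
  by_cases hA : H.GammaStar (s, t) (y, y')
  · obtain ⟨hx, h₁, h₂⟩ := exists_isApex hy hy' hA hxy
    exact ⟨_, _, h₁, ⟨x, hx, Or.inl ⟨rfl, rfl⟩⟩, h₂⟩
  · have hA' : H.GammaStar (t, s) (y, y') := by
      by_contra h
      exact hyy' ⟨hH, hA, fun h' => h h'.swap⟩
    rw [← deleteImplicationClass_comm] at hy hy'
    obtain ⟨hx, h₁, h₂⟩ := exists_isApex hy hy' hA' hxy
    exact ⟨_, _, h₁, ⟨x, hx.comm, Or.inr (Or.inl ⟨rfl, rfl⟩)⟩, h₂⟩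

lemma gamma_deleteImplicationClass (h : (H.deleteImplicationClass s t).Gamma p q) :
    H.GammaStar p q ∨ ∃ a b, H.GammaStar p a ∧ H.Jump s t a b ∧ H.GammaStar b q := by
  obtain ⟨p₁, p₂⟩ := p
  obtain ⟨q₁, q₂⟩ := q
  obtain ⟨hp, hq, ⟨rfl, hpq⟩ | ⟨rfl, hpq⟩⟩ := h
  · exact gamma_deleteImplicationClass_of_fst_eq hp hq hpq
  · obtain h | ⟨a, b, h₁, hj, h₂⟩ :=
      gamma_deleteImplicationClass_of_fst_eq hp.symm hq.symm hpq
    · exact Or.inl h.swap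
    · exact Or.inr ⟨a.swap, b.swap, h₁.swap, hj.swap, h₂.swap⟩

lemma gammaStar_deleteImplicationClass (hst : H.Adj s t)
    (h : (H.deleteImplicationClass s t).GammaStar p q) :
    H.GammaStar p q ∨ ∃ a b, H.GammaStar p a ∧ H.Jump s t a b ∧ H.GammaStar b q := by
  induction h with
  | refl => exact Or.inl ReflTransGen.refl
  | tail _ hstep ih =>
    obtain h₁ | ⟨a, b, h₁, hj, h₂⟩ := ih <;>
      obtain h₃ | ⟨a', b', h₃, hj', h₄⟩ := gamma_deleteImplicationClass hstep
    · exact Or.inl (h₁.trans h₃)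
    · exact Or.inr ⟨a', b', h₁.trans h₃, hj', h₄⟩
    · exact Or.inr ⟨a, b, h₁, hj, h₂.trans h₃⟩
    · have hcancel := hj.gammaStar_of_gammaStar_jump hst (h₂.trans h₃) hj'
      exact Or.inl (h₁.trans (hcancel.trans h₄))

lemma NoInvertibleEdge.deleteImplicationClass (hH : H.NoInvertibleEdge) (hst : H.Adj s t) :
    (H.deleteImplicationClass s t).NoInvertibleEdge := by
  intro u v huv h
  obtain h | ⟨a, b, h₁, hj, h₂⟩ := gammaStar_deleteImplicationClass hst h
  · exact hH u v huv.1 h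
  · exact hj.not_gammaStar_inversion hst h₁ h₂

lemma NoInvertibleEdge.gammaStar_trans_of_gammaStar (hH : H.NoInvertibleEdge)
    (hst : H.Adj s t) {u v w : V} (huv : H.GammaStar (s, t) (u, v))
    (hvw : H.GammaStar (s, t) (v, w)) : H.GammaStar (s, t) (u, w) := by
  have hvu : ¬ H.GammaStar (s, t) (v, u) := fun h => hH u v (huv.adj hst) (huv.symm.trans h)
  have huw : H.Adj u w := by
    by_contra huw
    have hstep : H.Gamma (v, w) (v, u) :=
      ⟨hvw.adj hst, (huv.adj hst).symm, Or.inl ⟨rfl, fun h => huw h.symm⟩⟩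
    exact hvu (hvw.tail hstep)
  by_contra h
  exact H.irrefl (GammaStar.triangle (huv.adj hst) huw (fun h' => hvu (hvw.trans h'))
    (fun h' => h (hvw.trans h')) (hvw.symm.trans huv)).1

namespace IsTransitiveOrientation

variable {F : V → V → Prop}

lemma flip (hF : H.IsTransitiveOrientation F) : H.IsTransitiveOrientation (flip F) :=
  ⟨fun u v => (hF.adj_iff u v).trans or_comm, fun u v => hF.asymm v u,
    fun u v w huv hvw => hF.trans w v u hvw huv⟩

lemma adj (hF : H.IsTransitiveOrientation F) {u v : V} (h : F u v) : H.Adj u v :=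
  (hF.adj_iff u v).2 (Or.inl h)

lemma of_gamma (hF : H.IsTransitiveOrientation F) (h : H.Gamma p q) (hp : F p.1 p.2) :
    F q.1 q.2 := by
  obtain ⟨p₁, p₂⟩ := p
  obtain ⟨q₁, q₂⟩ := q
  obtain ⟨-, hq, ⟨rfl, hpq⟩ | ⟨rfl, hpq⟩⟩ := h
  · exact ((hF.adj_iff _ _).1 hq).resolve_right fun h => hpq (hF.adj (hF.trans _ _ _ h hp)).symm
  · exact ((hF.adj_iff _ _).1 hq).resolve_right fun h => hpq (hF.adj (hF.trans _ _ _ hp h))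

lemma trans_gammaStar (hF : (H.deleteImplicationClass s t).IsTransitiveOrientation F)
    (hH : H.NoInvertibleEdge) (hst : H.Adj s t) {u v w : V} (huv : F u v)
    (hvw : H.GammaStar (s, t) (v, w)) : F u w ∨ H.GammaStar (s, t) (u, w) := by
  have huv' := hF.adj huv
  have huw : H.Adj u w := by
    by_contra huw
    exact huv'.2.2 (hvw.tail ⟨hvw.adj hst, huv'.1.symm, Or.inl ⟨rfl, fun h => huw h.symm⟩⟩)
  by_cases hA : H.GammaStar (s, t) (u, w)
  · exact Or.inr hA
  have hA' : ¬ H.GammaStar (s, t) (w, u) := fun h =>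
    huv'.2.2 (hH.gammaStar_trans_of_gammaStar hst hvw h)
  exact Or.inl (hF.of_gamma (p := (u, v)) (q := (u, w))
    ⟨huv', ⟨huw, hA, hA'⟩, Or.inl ⟨rfl, fun h => h.2.1 hvw⟩⟩ huv)

lemma sup_implicationClass (hF : (H.deleteImplicationClass s t).IsTransitiveOrientation F)
    (hH : H.NoInvertibleEdge) (hst : H.Adj s t) :
    H.IsTransitiveOrientation fun u v => F u v ∨ H.GammaStar (s, t) (u, v) where
  adj_iff u v := by
    refine ⟨fun h => ?_, ?_⟩
    · by_cases hA : H.GammaStar (s, t) (u, v)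
      · exact Or.inl (Or.inr hA)
      by_cases hA' : H.GammaStar (s, t) (v, u)
      · exact Or.inr (Or.inr hA')
      exact ((hF.adj_iff u v).1 ⟨h, hA, hA'⟩).imp Or.inl Or.inl
    · rintro ((h | h) | (h | h))
      exacts [(hF.adj h).1, h.adj hst, (hF.adj h).1.symm, (h.adj hst).symm]
  asymm u v := by
    rintro (h | h) (h' | h')
    exacts [hF.asymm u v h h', (hF.adj h).2.2 h', (hF.adj h').2.2 h,
      hH u v (h.adj hst) (h.symm.trans h')]
  trans u v w := by
    rintro (h | h) (h' | h')
    · exact Or.inl (hF.trans u v w h h')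
    · exact hF.trans_gammaStar hH hst h h'
    · rw [← deleteImplicationClass_comm] at hF
      exact (hF.flip.trans_gammaStar hH hst.symm h' h.swap).imp id GammaStar.swap
    · exact Or.inr (hH.gammaStar_trans_of_gammaStar hst h h')

end IsTransitiveOrientation

theorem NoInvertibleEdge.exists_isTransitiveOrientation [Finite V] (hH : H.NoInvertibleEdge) :
    ∃ F, H.IsTransitiveOrientation F := by
  induction H using WellFoundedLT.induction with
  | _ H ih =>
    by_cases h : ∃ s t, H.Adj s t
    · obtain ⟨s, t, hst⟩ := h
      obtain ⟨F, hF⟩ :=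
        ih _ (H.deleteImplicationClass_lt hst) (hH.deleteImplicationClass hst)
      exact ⟨_, hF.sup_implicationClass hH hst⟩
    · push Not at h
      exact ⟨fun _ _ => False, fun u v => by simp [h u v], fun _ _ h => h.elim,
        fun _ _ _ h => h.elim⟩

/-- The chain lists the pairs of the `Γ`-chain one after the other. -/
lemma GammaStar.exists_isForcingChain {u v : V} (huv : H.Adj u v)
    (h : H.GammaStar (u, v) r) :
    ∃ n W, H.IsForcingChain (2 * n) W ∧ W 0 = u ∧ W 1 = v ∧ W (2 * n) = r.1 ∧
      W (2 * n + 1) = r.2 := by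
  induction h with
  | refl =>
    exact ⟨0, fun i => if i = 0 then u else v, ⟨by simpa using huv, by simp⟩,
      rfl, rfl, rfl, rfl⟩
  | @tail b c _ hbc ih =>
    obtain ⟨n, W, ⟨hadj, hnadj⟩, h0, h1, hb₁, hb₂⟩ := ih
    obtain ⟨hbc₁, hbc₂, hc, hbc₃⟩ := Gamma.zigzag hbc
    refine ⟨n + 1, fun i => if i ≤ 2 * n + 1 then W i else if i = 2 * n + 2 then c.1 else c.2,
      ⟨fun i hi => ?_, fun i hi => ?_⟩, by simpa using h0, by simpa using h1,
      by simp [Nat.mul_succ], by simp [Nat.mul_succ]⟩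
    · obtain hi | rfl | rfl : i ≤ 2 * n ∨ i = 2 * n + 1 ∨ i = 2 * n + 2 := by omega
      · simpa [show i ≤ 2 * n + 1 by omega, show i + 1 ≤ 2 * n + 1 by omega] using hadj i hi
      · simpa [hb₂] using hbc₁
      · simpa using hc
    · obtain hi | rfl | rfl : i < 2 * n ∨ i = 2 * n ∨ i = 2 * n + 1 := by omega
      · simpa [show i ≤ 2 * n + 1 by omega, show i + 2 ≤ 2 * n + 1 by omega] using hnadj i hi
      · simpa [hb₁] using hbc₂
      · simpa [hb₂] using hbc₃

lemma IsForcingChain.cyclic {n : ℕ} {W : ℕ → V} (hW : H.IsForcingChain (2 * n) W)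
    (h₀ : W (2 * n + 1) = W 0) (h₁ : W (2 * n) = W 1) (j : ZMod (2 * n + 1)) :
    H.Adj (W j.val) (W (j + 1).val) ∧ ¬ H.Adj (W j.val) (W (j + 2).val) := by
  have hj := ZMod.val_lt j
  have hW' : ∀ i ≤ 2 * n + 1, W (i % (2 * n + 1)) = W i := fun i hi => by
    obtain hi | rfl := hi.lt_or_eq
    · rw [Nat.mod_eq_of_lt hi]
    · rw [Nat.mod_self, h₀]
  rw [show (1 : ZMod (2 * n + 1)) = (1 : ℕ) by simp,
    show (2 : ZMod (2 * n + 1)) = (2 : ℕ) by simp, ZMod.val_add_natCast, ZMod.val_add_natCast,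
    hW' _ (by omega)]
  refine ⟨hW.1 _ (by omega), ?_⟩
  obtain hlt | heq : j.val < 2 * n ∨ j.val = 2 * n := by omega
  · rw [hW' _ (by omega)]
    exact hW.2 _ hlt
  · rw [heq, show 2 * n + 2 = 1 + (2 * n + 1) by ring, Nat.add_mod_right, hW' 1 (by omega),
      ← h₁]
    exact H.irrefl

theorem exists_oddCycle_of_gammaStar_swap {u v : V} (huv : H.Adj u v)
    (h : H.GammaStar (u, v) (v, u)) :
    ∃ (k : ℕ) (z : ZMod (2 * k + 1) → V),
      ∀ j, H.Adj (z j) (z (j + 1)) ∧ ¬ H.Adj (z j) (z (j + 2)) := by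
  obtain ⟨n, W, hW, h0, h1, h2n, h2n1⟩ := h.exists_isForcingChain huv
  exact ⟨n, fun j => W j.val, hW.cyclic (h2n1.trans h0.symm) (h2n.trans h1.symm)⟩

end SimpleGraph

section Cocomparability

variable {V : Type*} {adj : V → V → Prop}

def IsCocompOrder (adj lt : V → V → Prop) : Prop :=
  ∀ x y z, lt x y → lt y z → adj x z → adj x y ∨ adj y z

lemma IsCocompOrder.swap {lt : V → V → Prop} (hsymm : Symmetric adj)
    (h : IsCocompOrder adj lt) : IsCocompOrder adj (Function.swap lt) := fun x y z hxy hyz hxz =>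
  (h z y x hyz hxy (hsymm hxz)).symm.imp (fun h => hsymm h) fun h => hsymm h

lemma IsCocompOrder.lt_of_isWalkOn {lt : V → V → Prop} [IsStrictTotalOrder V lt]
    (h : IsCocompOrder adj lt) (hsymm : Symmetric adj) (hrefl : Reflexive adj) {c : V} {t : ℕ}
    {w : ℕ → V} (hw : IsWalkOn adj t w) (hc : ∀ j ≤ t, ¬ adj c (w j)) (h₀ : lt (w 0) c) :
    lt (w t) c := by
  induction t with
  | zero => exact h₀
  | succ t ih =>
    have hlt := ih (fun i hi => hw i (by omega)) fun j hj => hc j (by omega)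
    obtain hlt' | heq | hgt := trichotomous_of lt (w (t + 1)) c
    · exact hlt'
    · exact absurd (hrefl c) (heq ▸ hc (t + 1) le_rfl)
    · obtain hadj | hadj := h _ _ _ hlt hgt (hw t (by omega))
      exacts [absurd (hsymm hadj) (hc t (by omega)), absurd hadj (hc (t + 1) le_rfl)]

lemma IsCocompOrder.not_asteroid {lt : V → V → Prop} [IsStrictTotalOrder V lt]
    (h : IsCocompOrder adj lt) (hsymm : Symmetric adj) (hrefl : Reflexive adj) {k : ℕ}
    (x : ZMod (2 * k + 1) → V) : ¬ Asteroid adj k x := by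
  intro hx
  set d : ZMod (2 * k + 1) := k + 1
  have hzero : (2 * k + 1 : ZMod (2 * k + 1)) = 0 := by
    exact_mod_cast ZMod.natCast_self (2 * k + 1)
  have hpred : ∀ i : ZMod (2 * k + 1), i + k = i - d := fun i => by linear_combination hzero
  have hsucc : ∀ i : ZMod (2 * k + 1), i + k + 1 = i + d := fun i => by ring
  refine ZMod.not_forall_add_iff_not k d (fun i => lt (x i) (x (i + d))) fun i => ?_
  obtain ⟨t, w, hw₀, hwt, hw, hc⟩ := hx (i + d)
  rw [hpred, add_sub_cancel_right] at hw₀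
  rw [hsucc] at hwt
  have hne₀ : w 0 ≠ x (i + d) := fun he => hc 0 t.zero_le (he ▸ hrefl _)
  have hne : w t ≠ x (i + d) := fun he => hc t le_rfl (he ▸ hrefl _)
  have same_side : lt (w 0) (x (i + d)) ↔ lt (w t) (x (i + d)) := by
    refine ⟨h.lt_of_isWalkOn hsymm hrefl hw hc, fun hlt => ?_⟩
    obtain hlt₀ | heq | hgt := trichotomous_of lt (w 0) (x (i + d))
    · exact hlt₀
    · exact absurd heq hne₀
    · exact absurd ((h.swap hsymm).lt_of_isWalkOn hsymm hrefl hw hc hgt) (asymm hlt)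
  rw [hw₀, hwt] at same_side
  rw [same_side]
  refine ⟨fun h₁ h₂ => asymm h₁ h₂, fun hn => ?_⟩
  obtain hlt | heq | hgt := trichotomous_of lt (x (i + d)) (x (i + d + d))
  · exact hlt
  · exact absurd (hwt.trans heq.symm) hne
  · exact absurd hgt hn

lemma compl_fromRel_adj_iff (hsymm : Symmetric adj) {u v : V} :
    (SimpleGraph.fromRel adj)ᶜ.Adj u v ↔ u ≠ v ∧ ¬ adj u v := by
  simp only [SimpleGraph.compl_adj, SimpleGraph.fromRel_adj]
  exact ⟨fun h => ⟨h.1, fun huv => h.2 ⟨h.1, Or.inl huv⟩⟩,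
    fun h => ⟨h.1, fun h' => h'.2.elim h.2 fun hvu => h.2 (hsymm hvu)⟩⟩

lemma adj_of_not_compl_fromRel_adj (hsymm : Symmetric adj) (hrefl : Reflexive adj) {u v : V}
    (h : ¬ (SimpleGraph.fromRel adj)ᶜ.Adj u v) : adj u v := by
  rw [compl_fromRel_adj_iff hsymm, not_and_not_right] at h
  obtain rfl | huv := eq_or_ne u v
  exacts [hrefl u, h huv]

lemma asteroid_of_oddCycle (hsymm : Symmetric adj) {k : ℕ} (z : ZMod (2 * k + 1) → V)
    (hz : ∀ j, ¬ adj (z j) (z (j + 1)) ∧ adj (z j) (z (j + 2))) :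
    Asteroid adj k fun i => z (2 * i) := by
  intro i
  have hzero : (2 * k + 1 : ZMod (2 * k + 1)) = 0 := by
    exact_mod_cast ZMod.natCast_self (2 * k + 1)
  have hl : 2 * (i + k) = 2 * i - 1 := by linear_combination hzero
  have hr : 2 * (i + k + 1) = 2 * i + 1 := by linear_combination hzero
  have hprev := hz (2 * i - 1)
  rw [sub_add_cancel, show 2 * i - 1 + 2 = 2 * i + 1 by ring] at hprev
  refine ⟨1, fun j => if j = 0 then z (2 * i - 1) else z (2 * i + 1), by simp [hl], by simp [hr],
    fun j hj => ?_, fun j hj => ?_⟩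
  · obtain rfl : j = 0 := by omega
    simpa using hprev.2
  · obtain rfl | rfl : j = 0 ∨ j = 1 := by omega
    · simpa using fun h => hprev.1 (hsymm h)
    · simpa using (hz (2 * i)).1

lemma noInvertibleEdge_of_not_asteroid (hsymm : Symmetric adj) (hrefl : Reflexive adj)
    (h : ¬ ∃ (k : ℕ) (x : ZMod (2 * k + 1) → V), Asteroid adj k x) :
    (SimpleGraph.fromRel adj)ᶜ.NoInvertibleEdge := by
  intro u v huv hinv
  obtain ⟨k, z, hz⟩ := SimpleGraph.exists_oddCycle_of_gammaStar_swap huv hinv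
  refine h ⟨k, _, asteroid_of_oddCycle hsymm z fun j => ⟨?_, ?_⟩⟩
  · exact ((compl_fromRel_adj_iff hsymm).1 (hz j).1).2
  · exact adj_of_not_compl_fromRel_adj hsymm hrefl (hz j).2

lemma isCocomp_of_isTransitiveOrientation (hsymm : Symmetric adj) {F : V → V → Prop}
    (hF : (SimpleGraph.fromRel adj)ᶜ.IsTransitiveOrientation F) : IsCocomp adj := by
  let : PartialOrder V :=
    { le a b := a = b ∨ F a b
      le_refl _ := Or.inl rfl
      le_trans := by
        rintro a b c (rfl | hab) (rfl | hbc)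
        exacts [Or.inl rfl, Or.inr hbc, Or.inr hab, Or.inr (hF.trans a b c hab hbc)]
      le_antisymm := by
        rintro a b (rfl | hab) (hba | hba)
        exacts [rfl, rfl, hba.symm, absurd hba (hF.asymm a b hab)] }
  refine ⟨fun a b => toLinearExtension a < toLinearExtension b,
    inferInstanceAs (IsStrictTotalOrder (LinearExtension V) (· < ·)),
    fun x y z hxy hyz hxz => ?_⟩
  have hF_of_lt : ∀ a b : V, toLinearExtension a < toLinearExtension b → ¬ adj a b → F a b :=
    fun a b hab hadj =>
      ((hF.adj_iff a b).1 ((compl_fromRel_adj_iff hsymm).2 ⟨hab.ne, hadj⟩)).resolve_right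
        fun hba => (hab.trans_le (toLinearExtension.monotone (Or.inr hba))).false
  by_contra hcon
  push Not at hcon
  exact ((compl_fromRel_adj_iff hsymm).1
    (hF.adj (hF.trans _ _ _ (hF_of_lt x y hxy hcon.1) (hF_of_lt y z hyz hcon.2)))).2 hxz

end Cocomparability

/-- **Theorem (Gallai, Statement 16).** A reflexive graph is a cocomparability graph if
and only if it does not contain an asteroid. -/
theorem isCocomp_iff_no_asteroid
    {V : Type*} [Fintype V] (adj : V → V → Prop)
    (hsymm : Symmetric adj) (hrefl : Reflexive adj) :
    IsCocomp adj ↔ ¬ ∃ (k : ℕ) (x : ZMod (2*k+1) → V), Asteroid adj k x := by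
  constructor
  · rintro ⟨lt, hlt, hcc⟩ ⟨k, x, hx⟩
    exact IsCocompOrder.not_asteroid hcc hsymm hrefl x hx
  · intro h
    obtain ⟨F, hF⟩ :=
      (noInvertibleEdge_of_not_asteroid hsymm hrefl h).exists_isTransitiveOrientation
    exact isCocomp_of_isTransitiveOrientation hsymm hF
end

section
/- Let G be a reflexive graph, let xy, uu', vv' be edges of G such that the edge xy avoids both uu' and vv', and suppose the vertex v is adjacent to both u and u' in G. Then xy avoids the edge uv or xy avoids the edge u'v. -/
/-!
Common definitions.  A reflexive graph on a finite vertex type `V` is given by a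
symmetric, reflexive adjacency relation `adj : V → V → Prop`; the edge set consists
of all pairs (including loops `v v`) with `adj u v`.
-/

variable {V : Type*}

/-!
Two edges `xy` and `ab` with disjoint ends avoid each other exactly when their ends can be
paired off into two non-adjacent pairs: `x, a` and `y, b`, or `x, b` and `y, a`. For loops this
is the definition; for four distinct vertices, the graphs on `{x, y, a, b}` containing the edges
`xy`, `ab` and a perfect matching of non-edges are precisely the induced `2K₂`, `P₄` and `C₄`.
Since `xy` avoids `vv'`, one of `xv`, `yv` is a non-edge, and together with the pairing for
`uu'` it yields a pairing for `uv` or for `u'v`.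
-/

section Avoids

variable {adj : V → V → Prop}

lemma not_adj_cross_of_nonadj_matching (hs : Symmetric adj) {x y a b p q r s : V}
    (hxy : adj x y) (hnd : [x, y, a, b].Nodup)
    (hset : ({p, q, r, s} : Set V) = {x, y, a, b}) (hpr : ¬ adj p r) (hqs : ¬ adj q s) :
    (¬ adj x a ∧ ¬ adj y b) ∨ (¬ adj x b ∧ ¬ adj y a) := by
  have mem : ∀ t ∈ ({x, y, a, b} : Set V), t = p ∨ t = q ∨ t = r ∨ t = s := by
    intro t ht
    rw [← hset] at ht
    simpa using ht
  have hrp : ¬ adj r p := fun h => hpr (hs h)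
  have hsq : ¬ adj s q := fun h => hqs (hs h)
  have hyx : adj y x := hs hxy
  simp only [List.nodup_cons, List.mem_cons, List.not_mem_nil, or_false, not_or,
    List.nodup_nil, and_true] at hnd
  obtain ⟨⟨ne_xy, ne_xa, ne_xb⟩, ⟨ne_ya, ne_yb⟩, ne_ab⟩ := hnd
  -- `p, q, r, s` permutes `x, y, a, b`, and the matching `pr, qs` cannot pair `x` with `y`.
  rcases mem x (by simp) with rfl | rfl | rfl | rfl <;>
    rcases mem y (by simp) with rfl | rfl | rfl | rfl <;>
    rcases mem a (by simp) with rfl | rfl | rfl | rfl <;>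
    rcases mem b (by simp) with rfl | rfl | rfl | rfl <;>
    first | contradiction | tauto

lemma exists_induced_of_not_adj_cross (hs : Symmetric adj) {x y a b : V}
    (hxy : adj x y) (hab : adj a b)
    (h : (¬ adj x a ∧ ¬ adj y b) ∨ (¬ adj x b ∧ ¬ adj y a)) :
    ∃ p q r s : V, ({p, q, r, s} : Set V) = {x, y, a, b} ∧
      (Is2K2 adj p q r s ∨ IsP4 adj p q r s ∨ IsC4 adj p q r s) := by
  wlog hmatch : ¬ adj x a ∧ ¬ adj y b generalizing a b
  · obtain ⟨p, q, r, s, hset, hpqrs⟩ := this (hs hab) h.symm (h.resolve_left hmatch)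
    exact ⟨p, q, r, s, by rw [hset, Set.pair_comm], hpqrs⟩
  obtain ⟨hxa, hyb⟩ := hmatch
  have hswap : ({y, x, b, a} : Set V) = {x, y, a, b} := by rw [Set.insert_comm, Set.pair_comm]
  by_cases hxb : adj x b <;> by_cases hya : adj y a
  · exact ⟨x, y, a, b, rfl, .inr <| .inr ⟨hxy, hya, hab, hs hxb, hxa, hyb⟩⟩
  · exact ⟨y, x, b, a, hswap, .inr <| .inl ⟨hs hxy, hxb, hs hab, hyb, hya, hxa⟩⟩
  · exact ⟨x, y, a, b, rfl, .inr <| .inl ⟨hxy, hya, hab, hxa, hxb, hyb⟩⟩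
  · exact ⟨x, y, a, b, rfl, .inl ⟨hxy, hab, hxa, hxb, hya, hyb⟩⟩

lemma Avoids.not_adj_cross_s18 (hs : Symmetric adj) {x y a b : V} (hxy : adj x y)
    (h : Avoids adj x y a b) : (¬ adj x a ∧ ¬ adj y b) ∨ (¬ adj x b ∧ ¬ adj y a) := by
  obtain ⟨-, ⟨rfl, rfl, hxa⟩ | ⟨rfl, -, hxa, hxb⟩ | ⟨-, rfl, hxa, hya⟩ | ⟨-, -, hind⟩⟩ :=
    h
  · exact .inl ⟨hxa, hxa⟩
  · exact .inl ⟨hxa, hxb⟩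
  · exact .inl ⟨hxa, hya⟩
  · rcases hind with ⟨hnd, p, q, r, s, hset, -, -, hpr, -, -, hqs⟩ |
      ⟨hnd, p, q, r, s, hset, -, -, -, hpr, -, hqs⟩ |
      ⟨hnd, p, q, r, s, hset, -, -, -, -, hpr, hqs⟩ <;>
    exact not_adj_cross_of_nonadj_matching hs hxy hnd hset hpr hqs

lemma avoids_of_not_adj_cross (hs : Symmetric adj) {x y a b : V} (hxy : adj x y)
    (hab : adj a b) (hdisj : x ≠ a ∧ x ≠ b ∧ y ≠ a ∧ y ≠ b)
    (h : (¬ adj x a ∧ ¬ adj y b) ∨ (¬ adj x b ∧ ¬ adj y a)) : Avoids adj x y a b := by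
  refine ⟨hdisj, ?_⟩
  rcases eq_or_ne x y with rfl | hxy' <;> rcases eq_or_ne a b with rfl | hab'
  · exact .inl ⟨rfl, rfl, by tauto⟩
  · exact .inr <| .inl ⟨rfl, hab', by tauto⟩
  · exact .inr <| .inr <| .inl ⟨hxy', rfl, by tauto⟩
  · have hnd : [x, y, a, b].Nodup := by simp [hxy', hab', hdisj]
    obtain ⟨p, q, r, s, hset, h2K2 | hP4 | hC4⟩ := exists_induced_of_not_adj_cross hs hxy hab h
    exacts [.inr <| .inr <| .inr ⟨hxy', hab', .inl ⟨hnd, p, q, r, s, hset, h2K2⟩⟩,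
      .inr <| .inr <| .inr ⟨hxy', hab', .inr <| .inl ⟨hnd, p, q, r, s, hset, hP4⟩⟩,
      .inr <| .inr <| .inr ⟨hxy', hab', .inr <| .inr ⟨hnd, p, q, r, s, hset, hC4⟩⟩]

end Avoids

theorem avoids_uv_or_u'v_general
    {V : Type*} (adj : V → V → Prop)
    (hsymm : Symmetric adj)
    (x y u u' v v' : V)
    (hxy : adj x y)
    (hvu : adj v u) (hvu' : adj v u')
    (h1 : Avoids adj x y u u') (h2 : Avoids adj x y v v') :
    Avoids adj x y u v ∨ Avoids adj x y u' v := by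
  obtain ⟨hxu, hxu', hyu, hyu'⟩ := h1.1
  obtain ⟨hxv, -, hyv, -⟩ := h2.1
  have hu := h1.not_adj_cross_s18 hsymm hxy
  have hv := h2.not_adj_cross_s18 hsymm hxy
  have hcross : ((¬ adj x u ∧ ¬ adj y v) ∨ (¬ adj x v ∧ ¬ adj y u)) ∨
      ((¬ adj x u' ∧ ¬ adj y v) ∨ (¬ adj x v ∧ ¬ adj y u')) := by
    tauto
  exact hcross.imp
    (avoids_of_not_adj_cross hsymm hxy (hsymm hvu) ⟨hxu, hxv, hyu, hyv⟩)
    (avoids_of_not_adj_cross hsymm hxy (hsymm hvu') ⟨hxu', hxv, hyu', hyv⟩)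

/-- If the edge `xy` avoids both edges `uu'` and `vv'`, and `v` is
adjacent to both `u` and `u'`, then `xy` avoids `uv` or `xy` avoids `u'v`. -/
theorem avoids_uv_or_u'v
    {V : Type*} [Fintype V] (adj : V → V → Prop)
    (hsymm : Symmetric adj) (hrefl : Reflexive adj)
    (x y u u' v v' : V)
    (hxy : adj x y) (huu' : adj u u') (hvv' : adj v v')
    (hvu : adj v u) (hvu' : adj v u')
    (h1 : Avoids adj x y u u') (h2 : Avoids adj x y v v') :
    Avoids adj x y u v ∨ Avoids adj x y u' v :=
  avoids_uv_or_u'v_general adj hsymm x y u u' v v' hxy hvu hvu' h1 h2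
end
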